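/- arXiv:2511.18060 — 9 statements merged into one kernel-verified Lean document; each statement's English description precedes it below -/
import Mathlib

section
/- Let d ≥ 1 and let π, ρ : ℝ^d → (0,∞) be twice continuously differentiable functions, and let a ∈ ℝ. Define v := π^{1−a} ρ^{a} (pointwise powers) and w := ∇log(ρ/π). Then pointwise on ℝ^d one has the identity ∇·( v ∇log(v/π) ) = a · π^{1−a} ρ^{a−1} ( ∇·( ρ ∇log(ρ/π) ) + (a−1) ρ |w|² ). (With a = e^{γ}, this is the key identity expressing the Wasserstein operator applied to the pre–Fisher–Rao density in terms of the post–Fisher–Rao density in the proof of the W-FR split PDE.) -/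
/-- Divergence of a vector field on `ℝ^d`: `∇·F (x) = ∑ i ∂_i F_i (x)`. -/
noncomputable def vecDiv {d : ℕ} (F : EuclideanSpace ℝ (Fin d) → EuclideanSpace ℝ (Fin d))
    (x : EuclideanSpace ℝ (Fin d)) : ℝ :=
  ∑ i, fderiv ℝ F x (EuclideanSpace.single i 1) i

/-!
With `ℓ := log (ρ/π)` one has `log (v/π) = a ℓ` and `v = ρ e^{(a-1)ℓ}`, so the flux of `v` is the
flux `ρ ∇ℓ` of `ρ` multiplied by the scalar `a e^{(a-1)ℓ}`. The Leibniz rule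
`∇·(c F) = c ∇·F + ⟪∇c, F⟫` with `∇c = a (a-1) e^{(a-1)ℓ} ∇ℓ` and `F = ρ ∇ℓ` produces the extra
term `a (a-1) e^{(a-1)ℓ} ρ |∇ℓ|²`.
-/

open InnerProductSpace

theorem Real.rpow_one_sub_mul_rpow_sub_one {p r : ℝ} (hp : 0 < p) (hr : 0 < r) (a : ℝ) :
    p ^ (1 - a) * r ^ (a - 1) = Real.exp ((a - 1) * Real.log (r / p)) := by
  rw [Real.rpow_def_of_pos hp, Real.rpow_def_of_pos hr, ← Real.exp_add,
    Real.log_div hr.ne' hp.ne']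
  ring_nf

theorem Real.log_rpow_one_sub_mul_rpow_div {p r : ℝ} (hp : 0 < p) (hr : 0 < r) (a : ℝ) :
    Real.log (p ^ (1 - a) * r ^ a / p) = a * Real.log (r / p) := by
  rw [Real.log_div (by positivity) hp.ne', Real.log_mul (by positivity) (by positivity),
    Real.log_rpow hp, Real.log_rpow hr, Real.log_div hr.ne' hp.ne']
  ring

section Gradient

variable {F : Type*} [NormedAddCommGroup F] [InnerProductSpace ℝ F] [CompleteSpace F]

theorem ContDiff.gradient {n : WithTop ℕ∞} {f : F → ℝ} (hf : ContDiff ℝ (n + 1) f) :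
    ContDiff ℝ n (gradient f) :=
  (toDual ℝ F).symm.contDiff.comp (hf.fderiv_right le_rfl)

theorem HasDerivAt.comp_hasGradientAt {g : ℝ → ℝ} {g' : ℝ} {f : F → ℝ} {f' x : F}
    (hg : HasDerivAt g g' (f x)) (hf : HasGradientAt f f' x) :
    HasGradientAt (fun y => g (f y)) (g' • f') x := by
  rw [hasGradientAt_iff_hasFDerivAt] at hf ⊢
  simpa [Function.comp_def] using hg.comp_hasFDerivAt x hf

end Gradient

theorem EuclideanSpace.gradient_apply {ι : Type*} [Fintype ι] [DecidableEq ι]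
    (f : EuclideanSpace ℝ ι → ℝ) (x : EuclideanSpace ℝ ι) (i : ι) :
    gradient f x i = fderiv ℝ f x (EuclideanSpace.single i 1) := by
  rw [← inner_gradient_left, EuclideanSpace.inner_single_right]
  simp

section Divergence

variable {d : ℕ} {x : EuclideanSpace ℝ (Fin d)}

theorem vecDiv_smul {c : EuclideanSpace ℝ (Fin d) → ℝ}
    {F : EuclideanSpace ℝ (Fin d) → EuclideanSpace ℝ (Fin d)}
    (hc : DifferentiableAt ℝ c x) (hF : DifferentiableAt ℝ F x) :
    vecDiv (fun y => c y • F y) x = c x * vecDiv F x + ⟪gradient c x, F x⟫_ℝ := by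
  simp only [vecDiv, fderiv_fun_smul hc hF, PiLp.inner_apply, EuclideanSpace.gradient_apply]
  simp [Finset.mul_sum, Finset.sum_add_distrib, mul_comm]

theorem vecDiv_comp_smul_smul_gradient {g : ℝ → ℝ} {g' : ℝ} {ρ ℓ : EuclideanSpace ℝ (Fin d) → ℝ}
    (hg : HasDerivAt g g' (ℓ x)) (hρ : DifferentiableAt ℝ ρ x) (hℓ : DifferentiableAt ℝ ℓ x)
    (hgradℓ : DifferentiableAt ℝ (gradient ℓ) x) :
    vecDiv (fun y => g (ℓ y) • (ρ y • gradient ℓ y)) x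
      = g (ℓ x) * vecDiv (fun y => ρ y • gradient ℓ y) x + g' * ρ x * ‖gradient ℓ x‖ ^ 2 := by
  have hgℓ := hg.comp_hasGradientAt hℓ.hasGradientAt
  rw [vecDiv_smul hgℓ.differentiableAt (hρ.fun_smul hgradℓ), hgℓ.gradient, real_inner_smul_left,
    real_inner_smul_right, real_inner_self_eq_norm_sq, mul_assoc]

end Divergence

theorem wasserstein_operator_fisher_rao_identity_general
    (d : ℕ)
    (π ρ : EuclideanSpace ℝ (Fin d) → ℝ)
    (hπpos : ∀ x, 0 < π x) (hρpos : ∀ x, 0 < ρ x)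
    (hπ : ContDiff ℝ 2 π) (hρ : ContDiff ℝ 2 ρ)
    (a : ℝ)
    (v : EuclideanSpace ℝ (Fin d) → ℝ)
    (hv : v = fun x => π x ^ (1 - a) * ρ x ^ a)
    (w : EuclideanSpace ℝ (Fin d) → EuclideanSpace ℝ (Fin d))
    (hw : w = fun x => gradient (fun y => Real.log (ρ y / π y)) x) :
    ∀ x : EuclideanSpace ℝ (Fin d),
      vecDiv (fun y => v y • gradient (fun z => Real.log (v z / π z)) y) x
        = a * (π x ^ (1 - a) * ρ x ^ (a - 1)) *
          (vecDiv (fun y => ρ y • gradient (fun z => Real.log (ρ z / π z)) y) x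
            + (a - 1) * ρ x * ‖w x‖ ^ 2) := by
  intro x
  subst hv hw
  set ℓ := fun z => Real.log (ρ z / π z)
  have hℓ : ContDiff ℝ 2 ℓ :=
    (hρ.div hπ fun y => (hπpos y).ne').log fun y => (div_pos (hρpos y) (hπpos y)).ne'
  have hℓ_diff : Differentiable ℝ ℓ := hℓ.differentiable two_ne_zero
  have hgrad_log : ∀ y, gradient (fun z => Real.log (π z ^ (1 - a) * ρ z ^ a / π z)) y
      = a • gradient ℓ y := fun y => by
    simp_rw [Real.log_rpow_one_sub_mul_rpow_div (hπpos _) (hρpos _)]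
    exact (((hasDerivAt_id' (ℓ y)).const_mul a).comp_hasGradientAt
      (hℓ_diff y).hasGradientAt).gradient.trans (by rw [mul_one])
  have hflux : (fun y => (π y ^ (1 - a) * ρ y ^ a) •
        gradient (fun z => Real.log (π z ^ (1 - a) * ρ z ^ a / π z)) y)
      = fun y => (a * Real.exp ((a - 1) * ℓ y)) • (ρ y • gradient ℓ y) := funext fun y => by
    rw [hgrad_log, smul_smul, smul_smul, ← Real.rpow_one_sub_mul_rpow_sub_one (hπpos y) (hρpos y),
      Real.rpow_sub_one (hρpos y).ne']
    congr 1
    field_simp [(hρpos y).ne']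
  have hg : HasDerivAt (fun t => a * Real.exp ((a - 1) * t))
      (a * (a - 1) * Real.exp ((a - 1) * ℓ x)) (ℓ x) :=
    (((hasDerivAt_id' (ℓ x)).const_mul (a - 1)).exp.const_mul a).congr_deriv (by ring)
  rw [hflux, vecDiv_comp_smul_smul_gradient hg ((hρ.differentiable two_ne_zero) x) (hℓ_diff x)
    (hℓ.gradient.differentiable one_ne_zero x),
    Real.rpow_one_sub_mul_rpow_sub_one (hπpos x) (hρpos x)]
  ring

/-- For positive `C²` functions `π, ρ` on `ℝ^d` and `a ∈ ℝ`, setting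
`v := π^{1-a} ρ^a` and `w := ∇ log (ρ/π)`, one has pointwise
`∇·(v ∇log(v/π)) = a π^{1-a} ρ^{a-1} ( ∇·(ρ ∇log(ρ/π)) + (a-1) ρ |w|² )`. -/
theorem wasserstein_operator_fisher_rao_identity
    (d : ℕ) (hd : 1 ≤ d)
    (π ρ : EuclideanSpace ℝ (Fin d) → ℝ)
    (hπpos : ∀ x, 0 < π x) (hρpos : ∀ x, 0 < ρ x)
    (hπ : ContDiff ℝ 2 π) (hρ : ContDiff ℝ 2 ρ)
    (a : ℝ)
    (v : EuclideanSpace ℝ (Fin d) → ℝ)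
    (hv : v = fun x => π x ^ (1 - a) * ρ x ^ a)
    (w : EuclideanSpace ℝ (Fin d) → EuclideanSpace ℝ (Fin d))
    (hw : w = fun x => gradient (fun y => Real.log (ρ y / π y)) x) :
    ∀ x : EuclideanSpace ℝ (Fin d),
      vecDiv (fun y => v y • gradient (fun z => Real.log (v z / π z)) y) x
        = a * (π x ^ (1 - a) * ρ x ^ (a - 1)) *
          (vecDiv (fun y => ρ y • gradient (fun z => Real.log (ρ z / π z)) y) x
            + (a - 1) * ρ x * ‖w x‖ ^ 2) :=
  wasserstein_operator_fisher_rao_identity_general d π ρ hπpos hρpos hπ hρ a v hv w hw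
end

section
/- Let d ≥ 1, let C_π be a symmetric positive definite d×d real matrix, let T > 0, let M : [0,T] → ℝ^{d×d} be continuous symmetric-matrix-valued, let m_0, m_π ∈ ℝ^d, and let C : [0,T] → ℝ^{d×d} be a differentiable matrix-valued function with C(0) = C_0, such that C_t − C_π is invertible for all t ∈ [0,T] and dC_t/dt = −C_t C_π^{-1}(I − 2M_t C_π^{-1})C_t − (I − (1/2)C_π + 2M_t)C_π^{-1}C_t − C_t C_π^{-1}(I − (1/2)C_π + 2M_t) + 2(I + M_t). Define m_t := m_π + (C_t − C_π) e^{t C_π^{-1}} (C_0 − C_π)^{-1} (m_0 − m_π). Then m(0) = m_0 and, for every t ∈ [0,T], m is differentiable at t with dm_t/dt = −( C_t C_π^{-1}(I − 2M_t C_π^{-1}) + (I + 2M_t) C_π^{-1} )(m_t − m_π). In particular the solution m_t of the mean ODE is independent of M except through C_t. -/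
/-!
Write `E = Cπ⁻¹` and `G_t = C_t - Cπ`. The Riccati equation for `C_t` factors as
`Ġ_t + G_t E = -K_t G_t` with `K_t = C_t E (1 - 2 M_t E) + (1 + 2 M_t) E`, so the integrating
factor `e^{tE}` turns `G_t e^{tE}` into a solution of the linear equation `Ẋ_t = -K_t X_t`.
Applying this to the fixed vector `(C₀ - Cπ)⁻¹ (m₀ - mπ)` gives the mean ODE, and at `t = 0`
the factor `G_0 (C₀ - Cπ)⁻¹` is the identity.
-/

open Matrix Set

attribute [local instance] Matrix.frobeniusNormedAddCommGroup Matrix.frobeniusNormedSpace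
attribute [local instance] Matrix.frobeniusNormedRing Matrix.frobeniusNormedAlgebra

theorem riccati_rhs_add_sub_mul_eq_neg_mul_sub {A : Type*} [Ring A] [Algebra ℝ A]
    (P E C M : A) (hEP : E * P = 1) (hPE : P * E = 1) :
    (-(C * E * (1 - (2 : ℝ) • (M * E)) * C)
          - (1 - (1 / 2 : ℝ) • P + (2 : ℝ) • M) * E * C
          - C * E * (1 - (1 / 2 : ℝ) • P + (2 : ℝ) • M)
          + (2 : ℝ) • (1 + M)) + (C - P) * E
      = -((C * E * (1 - (2 : ℝ) • (M * E)) + (1 + (2 : ℝ) • M) * E) * (C - P)) := by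
  simp only [mul_sub, sub_mul, mul_add, add_mul, smul_mul_assoc, mul_smul_comm,
    mul_assoc, hEP, hPE, mul_one, one_mul, smul_add, neg_sub]
  module

theorem HasDerivAt.mul_exp_smul {𝔸 : Type*} [NormedRing 𝔸] [NormedAlgebra ℝ 𝔸]
    [CompleteSpace 𝔸] {G : ℝ → 𝔸} {G' : 𝔸} {t : ℝ} (hG : HasDerivAt G G' t) (E : 𝔸) :
    HasDerivAt (fun u => G u * NormedSpace.exp (u • E))
      ((G' + G t * E) * NormedSpace.exp (t • E)) t :=
  (hG.mul (hasDerivAt_exp_smul_const' E t)).congr_deriv (by rw [add_mul, mul_assoc])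

theorem HasDerivAt.mulVec_const {m n : Type*} [Fintype m] [Fintype n]
    {A : ℝ → Matrix m n ℝ} {A' : Matrix m n ℝ} {t : ℝ} (hA : HasDerivAt A A' t) (v : n → ℝ) :
    HasDerivAt (fun u => A u *ᵥ v) (A' *ᵥ v) t := by
  let L : Matrix m n ℝ →L[ℝ] m → ℝ := LinearMap.toContinuousLinearMap ((mulVecBilin ℝ ℝ).flip v)
  have hL := L.hasFDerivAt (x := A t)
  exact hL.comp_hasDerivAt t hA

theorem mean_ode_explicit_solution_general
    (d : ℕ)
    (Cπ : Matrix (Fin d) (Fin d) ℝ) (hCπ : Cπ.PosDef)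
    (T : ℝ) (hT : 0 < T)
    (M : ℝ → Matrix (Fin d) (Fin d) ℝ)
    (m₀ mπ : Fin d → ℝ)
    (C₀ : Matrix (Fin d) (Fin d) ℝ)
    (C : ℝ → Matrix (Fin d) (Fin d) ℝ)
    (hC0 : C 0 = C₀)
    (hCinv : ∀ t ∈ Icc (0 : ℝ) T, IsUnit (C t - Cπ))
    (hCode : ∀ t ∈ Icc (0 : ℝ) T,
      HasDerivAt C
        (-(C t * Cπ⁻¹ * (1 - (2 : ℝ) • (M t * Cπ⁻¹)) * C t)
          - (1 - (1 / 2 : ℝ) • Cπ + (2 : ℝ) • M t) * Cπ⁻¹ * C t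
          - C t * Cπ⁻¹ * (1 - (1 / 2 : ℝ) • Cπ + (2 : ℝ) • M t)
          + (2 : ℝ) • (1 + M t)) t)
    (m : ℝ → Fin d → ℝ)
    (hm : ∀ t, m t = mπ + (C t - Cπ) *ᵥ
      (NormedSpace.exp (t • Cπ⁻¹) *ᵥ ((C₀ - Cπ)⁻¹ *ᵥ (m₀ - mπ)))) :
    m 0 = m₀ ∧
      ∀ t ∈ Icc (0 : ℝ) T,
        HasDerivAt m
          (-((C t * Cπ⁻¹ * (1 - (2 : ℝ) • (M t * Cπ⁻¹))
              + (1 + (2 : ℝ) • M t) * Cπ⁻¹) *ᵥ (m t - mπ))) t := by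
  set v₀ := (C₀ - Cπ)⁻¹ *ᵥ (m₀ - mπ)
  have hm_sub (u : ℝ) : m u - mπ = ((C u - Cπ) * NormedSpace.exp (u • Cπ⁻¹)) *ᵥ v₀ := by
    rw [hm u, mulVec_mulVec, add_sub_cancel_left]
  have hm_eq : m = fun u => mπ + ((C u - Cπ) * NormedSpace.exp (u • Cπ⁻¹)) *ᵥ v₀ :=
    funext fun u => by rw [← hm_sub, add_sub_cancel]
  refine ⟨?_, fun t ht => ?_⟩
  · have hC₀ : IsUnit (C₀ - Cπ) := hC0 ▸ hCinv 0 ⟨le_rfl, hT.le⟩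
    rw [hm 0, hC0, zero_smul, NormedSpace.exp_zero, one_mulVec, mulVec_mulVec,
      mul_nonsing_inv _ ((isUnit_iff_isUnit_det _).1 hC₀), one_mulVec, add_sub_cancel]
  have hdet : IsUnit Cπ.det := (isUnit_iff_isUnit_det _).1 hCπ.isUnit
  have hderiv := ((((hCode t ht).sub_const Cπ).mul_exp_smul Cπ⁻¹).mulVec_const v₀).const_add mπ
  rw [riccati_rhs_add_sub_mul_eq_neg_mul_sub Cπ Cπ⁻¹ (C t) (M t) (nonsing_inv_mul Cπ hdet)
    (mul_nonsing_inv Cπ hdet)] at hderiv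
  rw [hm_sub, hm_eq]
  refine hderiv.congr_deriv ?_
  rw [neg_mul, mul_assoc, neg_mulVec, mulVec_mulVec v₀]
  rfl -- the two sides agree only up to unfolding instances

/-- Explicit solution of the mean ODE of the perturbed
Wasserstein–Fisher–Rao dynamics in the multivariate Gaussian case; the mean solution is
independent of the perturbation `M` except through the covariance `C`. -/
theorem mean_ode_explicit_solution
    (d : ℕ) (hd : 1 ≤ d)
    (Cπ : Matrix (Fin d) (Fin d) ℝ) (hCπ : Cπ.PosDef)
    (T : ℝ) (hT : 0 < T)
    (M : ℝ → Matrix (Fin d) (Fin d) ℝ)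
    (hMc : ContinuousOn M (Icc 0 T)) (hMs : ∀ t ∈ Icc (0 : ℝ) T, (M t).IsSymm)
    (m₀ mπ : Fin d → ℝ)
    (C₀ : Matrix (Fin d) (Fin d) ℝ)
    (C : ℝ → Matrix (Fin d) (Fin d) ℝ)
    (hC0 : C 0 = C₀)
    (hCinv : ∀ t ∈ Icc (0 : ℝ) T, IsUnit (C t - Cπ))
    (hCode : ∀ t ∈ Icc (0 : ℝ) T,
      HasDerivAt C
        (-(C t * Cπ⁻¹ * (1 - (2 : ℝ) • (M t * Cπ⁻¹)) * C t)
          - (1 - (1 / 2 : ℝ) • Cπ + (2 : ℝ) • M t) * Cπ⁻¹ * C t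
          - C t * Cπ⁻¹ * (1 - (1 / 2 : ℝ) • Cπ + (2 : ℝ) • M t)
          + (2 : ℝ) • (1 + M t)) t)
    (m : ℝ → Fin d → ℝ)
    (hm : ∀ t, m t = mπ + (C t - Cπ) *ᵥ
      (NormedSpace.exp (t • Cπ⁻¹) *ᵥ ((C₀ - Cπ)⁻¹ *ᵥ (m₀ - mπ)))) :
    m 0 = m₀ ∧
      ∀ t ∈ Icc (0 : ℝ) T,
        HasDerivAt m
          (-((C t * Cπ⁻¹ * (1 - (2 : ℝ) • (M t * Cπ⁻¹))
              + (1 + (2 : ℝ) • M t) * Cπ⁻¹) *ᵥ (m t - mπ))) t :=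
  mean_ode_explicit_solution_general d Cπ hCπ T hT M m₀ mπ C₀ C hC0 hCinv hCode m hm
end

section
/- Let d ≥ 1, let C_π be a symmetric positive definite d×d real matrix, set Γ := C_π^{-1} + (1/2)I, and let C_0 be symmetric positive definite with C_0 − C_π invertible. Assume that for every t ≥ 0 the matrix K_t := e^{Γt}[ (C_0 − C_π)^{-1} + (2I + C_π)^{-1} ] e^{Γt} − (2I + C_π)^{-1} is invertible. Then C_t := C_π + K_t^{-1} satisfies C(0) = C_0 and, for every t ≥ 0, C is differentiable at t with dC_t/dt = −C_t C_π^{-1} C_t + C_t − C_π^{-1} C_t − C_t C_π^{-1} + 2I. (This is the exact covariance evolution of the Wasserstein–Fisher–Rao gradient flow between multivariate Gaussians with target covariance C_π.) -/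
/-! Writing `M := C - Cπ = K⁻¹`, the equation for `C` is the Riccati equation
`M' = -(M Γ + Γ M + M Cπ⁻¹ M)`. Its inverse `K` therefore solves the linear Lyapunov equation
`K' = Γ K + K Γ + Cπ⁻¹`, and `B := (2I + Cπ)⁻¹` is a stationary point of that equation:
`Γ B + B Γ = Cπ⁻¹`, because `Γ = ½ Cπ⁻¹ (2I + Cπ) = ½ (2I + Cπ) Cπ⁻¹`. Hence `K + B` solves
`X' = Γ X + X Γ`, whose solutions are `e^{Γt} X₀ e^{Γt}`. -/

attribute [local instance] Matrix.frobeniusNormedRing Matrix.frobeniusNormedAlgebra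

open scoped Ring

section Inverse

variable {𝕜 R : Type*} [NontriviallyNormedField 𝕜] [NormedRing R] [HasSummableGeomSeries R]
  [NormedAlgebra 𝕜 R]

theorem HasDerivAt.ringInverse {f : 𝕜 → R} {f' : R} {t : 𝕜} (hf : HasDerivAt f f' t)
    (hft : IsUnit (f t)) :
    HasDerivAt (fun s => (f s)⁻¹ʳ) (-((f t)⁻¹ʳ * f' * (f t)⁻¹ʳ)) t := by
  obtain ⟨u, hu⟩ := hft
  have hinv := hasFDerivAt_ringInverse (𝕜 := 𝕜) u
  rw [hu] at hinv
  rw [← hu, Ring.inverse_unit]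
  exact hinv.comp_hasDerivAt t hf

end Inverse

section Lyapunov

variable {𝔸 : Type*} [NormedRing 𝔸] [NormedAlgebra ℝ 𝔸] [CompleteSpace 𝔸]

theorem hasDerivAt_exp_smul_mul_mul_exp_smul (Γ A : 𝔸) (t : ℝ) :
    HasDerivAt (fun s : ℝ => NormedSpace.exp (s • Γ) * A * NormedSpace.exp (s • Γ))
      (Γ * (NormedSpace.exp (t • Γ) * A * NormedSpace.exp (t • Γ)) +
        NormedSpace.exp (t • Γ) * A * NormedSpace.exp (t • Γ) * Γ) t := by
  have h := ((hasDerivAt_exp_smul_const' Γ t).mul_const A).mul (hasDerivAt_exp_smul_const Γ t)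
  convert h using 1
  · rfl
  · noncomm_ring

theorem HasDerivAt.ringInverse_of_lyapunov {K : ℝ → 𝔸} {Γ B : 𝔸} {t : ℝ}
    (hK : HasDerivAt K (Γ * (K t + B) + (K t + B) * Γ) t) (hKt : IsUnit (K t)) :
    HasDerivAt (fun s => (K s)⁻¹ʳ)
      (-((K t)⁻¹ʳ * Γ + (K t)⁻¹ʳ * (Γ * B + B * Γ) * (K t)⁻¹ʳ + Γ * (K t)⁻¹ʳ)) t := by
  convert hK.ringInverse hKt using 2
  set M := (K t)⁻¹ʳ
  have hMK : M * K t = 1 := Ring.inverse_mul_cancel _ hKt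
  have hKM : K t * M = 1 := Ring.mul_inverse_cancel _ hKt
  calc M * Γ + M * (Γ * B + B * Γ) * M + Γ * M
      = M * Γ * (K t * M) + M * (Γ * B + B * Γ) * M + M * K t * (Γ * M) := by
        rw [hMK, hKM, one_mul, mul_one]
    _ = M * (Γ * (K t + B) + (K t + B) * Γ) * M := by noncomm_ring

end Lyapunov

section Algebra

variable {R : Type*} [Ring R] [Algebra ℝ R]

theorem lyapunov_inverse_two_smul_one_add {P : R} (hP : IsUnit P) (hS : IsUnit ((2 : ℝ) • 1 + P)) :
    (P⁻¹ʳ + (1 / 2 : ℝ) • 1) * ((2 : ℝ) • 1 + P)⁻¹ʳ +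
      ((2 : ℝ) • 1 + P)⁻¹ʳ * (P⁻¹ʳ + (1 / 2 : ℝ) • 1) = P⁻¹ʳ := by
  set S := (2 : ℝ) • (1 : R) + P
  have hΓS : P⁻¹ʳ + (1 / 2 : ℝ) • 1 = (1 / 2 : ℝ) • (P⁻¹ʳ * S) := by
    rw [mul_add, mul_smul_comm, mul_one, Ring.inverse_mul_cancel _ hP, smul_add, smul_smul]
    norm_num
  have hSΓ : P⁻¹ʳ + (1 / 2 : ℝ) • 1 = (1 / 2 : ℝ) • (S * P⁻¹ʳ) := by
    rw [add_mul, smul_mul_assoc, one_mul, Ring.mul_inverse_cancel _ hP, smul_add, smul_smul]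
    norm_num
  have hΓB : (P⁻¹ʳ + (1 / 2 : ℝ) • 1) * S⁻¹ʳ = (1 / 2 : ℝ) • P⁻¹ʳ := by
    rw [hΓS, smul_mul_assoc, mul_assoc, Ring.mul_inverse_cancel _ hS, mul_one]
  have hBΓ : S⁻¹ʳ * (P⁻¹ʳ + (1 / 2 : ℝ) • 1) = (1 / 2 : ℝ) • P⁻¹ʳ := by
    rw [hSΓ, mul_smul_comm, ← mul_assoc, Ring.inverse_mul_cancel _ hS, one_mul]
  rw [hΓB, hBΓ, ← add_smul]
  norm_num

/-- `Q` plays the role of `Cπ⁻¹`. -/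
def wfrCovarianceField (Q C : R) : R :=
  -(C * Q * C) + C - Q * C - C * Q + (2 : ℝ) • 1

theorem wfrCovarianceField_add {P Q : R} (hPQ : P * Q = 1) (hQP : Q * P = 1) (M : R) :
    wfrCovarianceField Q (P + M) =
      -(M * (Q + (1 / 2 : ℝ) • 1) + M * Q * M + (Q + (1 / 2 : ℝ) • 1) * M) := by
  have hM : (1 / 2 : ℝ) • M + (1 / 2 : ℝ) • M = M := by rw [← add_smul]; norm_num
  calc wfrCovarianceField Q (P + M)
      = -(P * Q * P + P * Q * M + M * (Q * P) + M * Q * M) + (P + M) - (Q * P + Q * M)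
          - (P * Q + M * Q) + ((2 : ℝ) • 1) := by unfold wfrCovarianceField; noncomm_ring
    _ = -(M * Q + ((1 / 2 : ℝ) • M + (1 / 2 : ℝ) • M) + M * Q * M + Q * M) := by
        simp only [hPQ, hQP, hM, one_mul, mul_one, two_smul]; abel
    _ = _ := by
        simp only [mul_add, add_mul, mul_smul_comm, smul_mul_assoc, mul_one, one_mul]; abel

end Algebra

theorem wfr_covariance_exact_solution_general
    (d : ℕ)
    (Cπ : Matrix (Fin d) (Fin d) ℝ) (hCπ : Cπ.PosDef)
    (Γ : Matrix (Fin d) (Fin d) ℝ) (hΓ : Γ = Cπ⁻¹ + (1 / 2 : ℝ) • 1)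
    (C₀ : Matrix (Fin d) (Fin d) ℝ) (hC₀π : IsUnit (C₀ - Cπ))
    (K : ℝ → Matrix (Fin d) (Fin d) ℝ)
    (hKdef : ∀ t, K t =
      NormedSpace.exp (t • Γ) * ((C₀ - Cπ)⁻¹ + ((2 : ℝ) • 1 + Cπ)⁻¹) *
        NormedSpace.exp (t • Γ) - ((2 : ℝ) • 1 + Cπ)⁻¹)
    (hK : ∀ t : ℝ, 0 ≤ t → IsUnit (K t))
    (C : ℝ → Matrix (Fin d) (Fin d) ℝ)
    (hC : ∀ t, C t = Cπ + (K t)⁻¹) :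
    C 0 = C₀ ∧
      ∀ t : ℝ, 0 ≤ t →
        HasDerivAt C
          (-(C t * Cπ⁻¹ * C t) + C t - Cπ⁻¹ * C t - C t * Cπ⁻¹ + (2 : ℝ) • 1) t := by
  simp only [Matrix.nonsing_inv_eq_ringInverse] at hΓ hKdef hC ⊢
  set B := ((2 : ℝ) • 1 + Cπ)⁻¹ʳ
  have hCπu : IsUnit Cπ := hCπ.isUnit
  have hS : ((2 : ℝ) • (1 : Matrix (Fin d) (Fin d) ℝ) + Cπ).PosDef :=
    Matrix.PosDef.posSemidef_add (Matrix.PosSemidef.one.smul zero_le_two) hCπ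
  have hB : Γ * B + B * Γ = Cπ⁻¹ʳ := hΓ ▸ lyapunov_inverse_two_smul_one_add hCπu hS.isUnit
  have hK' : ∀ t, HasDerivAt K (Γ * (K t + B) + (K t + B) * Γ) t := fun t => by
    rw [hKdef, sub_add_cancel, funext hKdef]
    exact (hasDerivAt_exp_smul_mul_mul_exp_smul _ _ t).sub_const B
  refine ⟨?_, fun t ht => ?_⟩
  · rw [hC, hKdef, zero_smul, NormedSpace.exp_zero, one_mul, mul_one, add_sub_cancel_right,
      Ring.inverse_inverse hC₀π, add_sub_cancel]
  · have h := ((hK' t).ringInverse_of_lyapunov (hK t ht)).const_add Cπ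
    rw [hB, hΓ, ← wfrCovarianceField_add (Ring.mul_inverse_cancel _ hCπu)
      (Ring.inverse_mul_cancel _ hCπu), ← hC] at h
    exact h.congr_of_eventuallyEq (.of_forall hC)

/-- Exact covariance evolution of the Wasserstein–Fisher–Rao gradient flow
between multivariate Gaussians with target covariance `Cπ`. -/
theorem wfr_covariance_exact_solution
    (d : ℕ) (hd : 1 ≤ d)
    (Cπ : Matrix (Fin d) (Fin d) ℝ) (hCπ : Cπ.PosDef)
    (Γ : Matrix (Fin d) (Fin d) ℝ) (hΓ : Γ = Cπ⁻¹ + (1 / 2 : ℝ) • 1)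
    (C₀ : Matrix (Fin d) (Fin d) ℝ) (hC₀ : C₀.PosDef) (hC₀π : IsUnit (C₀ - Cπ))
    (K : ℝ → Matrix (Fin d) (Fin d) ℝ)
    (hKdef : ∀ t, K t =
      NormedSpace.exp (t • Γ) * ((C₀ - Cπ)⁻¹ + ((2 : ℝ) • 1 + Cπ)⁻¹) *
        NormedSpace.exp (t • Γ) - ((2 : ℝ) • 1 + Cπ)⁻¹)
    (hK : ∀ t : ℝ, 0 ≤ t → IsUnit (K t))
    (C : ℝ → Matrix (Fin d) (Fin d) ℝ)
    (hC : ∀ t, C t = Cπ + (K t)⁻¹) :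
    C 0 = C₀ ∧
      ∀ t : ℝ, 0 ≤ t →
        HasDerivAt C
          (-(C t * Cπ⁻¹ * C t) + C t - Cπ⁻¹ * C t - C t * Cπ⁻¹ + (2 : ℝ) • 1) t :=
  wfr_covariance_exact_solution_general d Cπ hCπ Γ hΓ C₀ hC₀π K hKdef hK C hC
end

section
/- Let d ≥ 1, let C_π be a symmetric positive definite d×d real matrix, set Γ := C_π^{-1} + (1/2)I, let γ > 0, and let E_0 be symmetric positive definite. Define the sequence (E_n) by the recursion E_{n+1} = ( e^{Γγ}[ E_n^{-1} + (2I + C_π)^{-1} ] e^{Γγ} − (2I + C_π)^{-1} )^{-1}. Then for every n ≥ 0 this recursion is well defined (all matrices being inverted are invertible) and E_n = e^{−nγΓ} ( E_0^{-1} + (1/2)Γ^{-1} C_π^{-1}( I − e^{−2nγΓ} ) )^{-1} e^{−nγΓ}. (This is the closed form of the covariance error E_n = C_{nγ} − C_π of the exact Wasserstein–Fisher–Rao flow between Gaussians, with Ω := (1/2)Γ^{-1}.) -/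
/-!
Adding `B := (2I + C_π)⁻¹` linearises the recursion: with `X := e^{γΓ}` it reads
`E_{n+1}⁻¹ + B = X (E_n⁻¹ + B) X`, so `E_n⁻¹ = Xⁿ (E_0⁻¹ + B) Xⁿ - B`. In an eigenbasis of `C_π`
all of `C_π`, `Γ`, `e^{tΓ}` and `B` are diagonal; there one checks `B = ½ Γ⁻¹ C_π⁻¹` and that
`B (I - e^{-sΓ})` is positive semidefinite for `s ≥ 0`. Since `B` commutes with `e^{tΓ}`,
`Xⁿ (E_0⁻¹ + B) Xⁿ - B = e^{nγΓ} (E_0⁻¹ + B (I - e^{-2nγΓ})) e^{nγΓ}`, whose middle factor is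
positive definite; this gives both the closed form and every invertibility claim.
-/

open Matrix

variable {n : Type*} [Fintype n] [DecidableEq n]

theorem Commute.mul_add_mul_one_sub_mul_self {R : Type*} [Ring R] {x y b : R} (g : R)
    (hxb : Commute x b) (hxy : x * y = 1) (hyx : y * x = 1) :
    x * (g + b * (1 - y * y)) * x = x * (g + b) * x - b := by
  have hb : x * (b * (y * y)) * x = b := by
    rw [← mul_assoc, hxb.eq]
    simp only [mul_assoc]
    rw [hyx, mul_one, hxy, mul_one]
  simp only [mul_add, mul_sub, add_mul, sub_mul, mul_one]
  rw [hb]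
  abel

namespace Matrix

theorem pow_mul_inv_add_mul_pow_sub {R : Type*} [CommRing R] (x b F : Matrix n n R) (m : ℕ)
    (hu : IsUnit (x ^ m * F * x ^ m - b)) :
    x * ((x ^ m * F * x ^ m - b)⁻¹⁻¹ + b) * x - b = x ^ (m + 1) * F * x ^ (m + 1) - b := by
  rw [nonsing_inv_nonsing_inv _ ((isUnit_iff_isUnit_det _).mp hu), sub_add_cancel]
  nth_rewrite 1 [pow_succ']
  rw [pow_succ]
  simp only [mul_assoc]

theorem eq_inv_pow_mul_inv_add_mul_pow_sub {R : Type*} [CommRing R] {x b : Matrix n n R}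
    {E : ℕ → Matrix n n R} (hE0 : IsUnit (E 0))
    (hrec : ∀ m, E (m + 1) = (x * ((E m)⁻¹ + b) * x - b)⁻¹)
    (hu : ∀ m, IsUnit (x ^ m * ((E 0)⁻¹ + b) * x ^ m - b)) (m : ℕ) :
    E m = (x ^ m * ((E 0)⁻¹ + b) * x ^ m - b)⁻¹ := by
  induction m with
  | zero =>
    rw [pow_zero, one_mul, mul_one, add_sub_cancel_right,
      nonsing_inv_nonsing_inv _ ((isUnit_iff_isUnit_det _).mp hE0)]
  | succ m ih => rw [hrec, ih, pow_mul_inv_add_mul_pow_sub _ _ _ _ (hu m)]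

theorem exp_smul_mul_exp_smul (Γ : Matrix n n ℝ) (a b : ℝ) :
    NormedSpace.exp (a • Γ) * NormedSpace.exp (b • Γ) = NormedSpace.exp ((a + b) • Γ) := by
  rw [add_smul, exp_add_of_commute _ _ ((Commute.refl Γ).smul_left a |>.smul_right b)]

theorem inv_exp_smul (Γ : Matrix n n ℝ) (a : ℝ) :
    (NormedSpace.exp (a • Γ))⁻¹ = NormedSpace.exp ((-a) • Γ) := by
  rw [neg_smul, exp_neg]

namespace IsHermitian

variable {A : Matrix n n ℝ} (hA : A.IsHermitian)

noncomputable def eigenbasisDiagonal : (n → ℝ) →ₐ[ℝ] Matrix n n ℝ :=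
  AlgHom.comp (Unitary.conjStarAlgAut ℝ _ hA.eigenvectorUnitary : Matrix n n ℝ →ₐ[ℝ] Matrix n n ℝ)
    (diagonalAlgHom ℝ)

lemma eigenbasisDiagonal_apply (f : n → ℝ) :
    hA.eigenbasisDiagonal f = (hA.eigenvectorUnitary : Matrix n n ℝ) * diagonal f *
      star (hA.eigenvectorUnitary : Matrix n n ℝ) :=
  rfl

lemma eigenbasisDiagonal_eigenvalues : hA.eigenbasisDiagonal hA.eigenvalues = A := by
  conv_rhs => rw [hA.spectral_theorem]
  rfl

lemma inv_eigenbasisDiagonal {f : n → ℝ} (hf : ∀ i, f i ≠ 0) :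
    (hA.eigenbasisDiagonal f)⁻¹ = hA.eigenbasisDiagonal f⁻¹ := by
  refine inv_eq_left_inv ?_
  rw [← map_mul, show f⁻¹ * f = 1 from funext fun i => inv_mul_cancel₀ (hf i), map_one]

lemma exp_eigenbasisDiagonal (f : n → ℝ) :
    NormedSpace.exp (hA.eigenbasisDiagonal f) = hA.eigenbasisDiagonal (Real.exp ∘ f) := by
  have hU := mem_unitaryGroup_iff.mp hA.eigenvectorUnitary.2
  rw [eigenbasisDiagonal_apply, eigenbasisDiagonal_apply, ← inv_eq_right_inv hU,
    exp_conj _ _ Unitary.isUnit_coe, exp_diagonal, Pi.exp_def, Real.exp_eq_exp_ℝ]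
  rfl

lemma posSemidef_eigenbasisDiagonal {f : n → ℝ} (hf : 0 ≤ f) :
    (hA.eigenbasisDiagonal f).PosSemidef := by
  simpa [eigenbasisDiagonal_apply, star_eq_conjTranspose] using
    (posSemidef_diagonal_iff.mpr hf).mul_mul_conjTranspose_same
      (hA.eigenvectorUnitary : Matrix n n ℝ)

end IsHermitian

namespace PosDef

open IsHermitian

variable {C Γ : Matrix n n ℝ}

lemma inv_eq_eigenbasisDiagonal (hC : C.PosDef) :
    C⁻¹ = hC.isHermitian.eigenbasisDiagonal hC.isHermitian.eigenvalues⁻¹ := by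
  conv_lhs => rw [← hC.isHermitian.eigenbasisDiagonal_eigenvalues]
  exact inv_eigenbasisDiagonal _ fun i => (hC.eigenvalues_pos i).ne'

lemma inv_eigenvalues_add_smul_one_pos (hC : C.PosDef) {c : ℝ} (hc : 0 ≤ c) (i : n) :
    0 < (hC.isHermitian.eigenvalues⁻¹ + c • 1) i := by
  have := hC.eigenvalues_pos i
  simp only [Pi.add_apply, Pi.inv_apply, Pi.smul_apply, Pi.one_apply, smul_eq_mul]
  positivity

lemma inv_add_smul_one_eq_eigenbasisDiagonal (hC : C.PosDef) (c : ℝ) :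
    C⁻¹ + c • 1 = hC.isHermitian.eigenbasisDiagonal (hC.isHermitian.eigenvalues⁻¹ + c • 1) := by
  rw [hC.inv_eq_eigenbasisDiagonal, map_add, map_smul, map_one]

lemma two_smul_one_add_inv_eq (hC : C.PosDef) (hΓ : Γ = C⁻¹ + (1 / 2 : ℝ) • 1) :
    ((2 : ℝ) • 1 + C)⁻¹ = (1 / 2 : ℝ) • (Γ⁻¹ * C⁻¹) := by
  have hpos := hC.eigenvalues_pos
  rw [hΓ, hC.inv_add_smul_one_eq_eigenbasisDiagonal, hC.inv_eq_eigenbasisDiagonal,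
    inv_eigenbasisDiagonal _ fun i => (hC.inv_eigenvalues_add_smul_one_pos (by norm_num) i).ne']
  conv_lhs => rw [← hC.isHermitian.eigenbasisDiagonal_eigenvalues]
  rw [← map_one hC.isHermitian.eigenbasisDiagonal, ← map_smul, ← map_add,
    inv_eigenbasisDiagonal _ fun i => ?_, ← map_mul, ← map_smul]
  · congr 1
    funext i
    have := (hpos i).ne'
    simp only [Pi.add_apply, Pi.inv_apply, Pi.smul_apply, Pi.one_apply, Pi.mul_apply, smul_eq_mul]
    field_simp
  · have := hpos i
    simp only [Pi.add_apply, Pi.smul_apply, Pi.one_apply, smul_eq_mul]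
    positivity

lemma commute_exp_smul_two_smul_one_add_inv (hC : C.PosDef) (hΓ : Γ = C⁻¹ + (1 / 2 : ℝ) • 1)
    (t : ℝ) : Commute (NormedSpace.exp (t • Γ)) ((2 : ℝ) • 1 + C)⁻¹ := by
  rw [hC.two_smul_one_add_inv_eq hΓ, hΓ, hC.inv_add_smul_one_eq_eigenbasisDiagonal,
    hC.inv_eq_eigenbasisDiagonal,
    inv_eigenbasisDiagonal _ fun i => (hC.inv_eigenvalues_add_smul_one_pos (by norm_num) i).ne',
    ← map_smul, exp_eigenbasisDiagonal, ← map_mul, ← map_smul]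
  exact (Commute.all _ _).map _

lemma posSemidef_half_smul_inv_mul_inv_mul_one_sub_exp (hC : C.PosDef)
    (hΓ : Γ = C⁻¹ + (1 / 2 : ℝ) • 1) {s : ℝ} (hs : 0 ≤ s) :
    ((1 / 2 : ℝ) • (Γ⁻¹ * C⁻¹ * (1 - NormedSpace.exp ((-s) • Γ)))).PosSemidef := by
  have hg := hC.inv_eigenvalues_add_smul_one_pos (c := 1 / 2) (by norm_num)
  rw [hΓ, hC.inv_add_smul_one_eq_eigenbasisDiagonal, hC.inv_eq_eigenbasisDiagonal,
    inv_eigenbasisDiagonal _ fun i => (hg i).ne', ← map_smul, exp_eigenbasisDiagonal,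
    ← map_one hC.isHermitian.eigenbasisDiagonal, ← map_sub, ← map_mul, ← map_mul, ← map_smul]
  refine posSemidef_eigenbasisDiagonal _ fun i => ?_
  have := hC.eigenvalues_pos i
  have := hg i
  have := sub_nonneg.mpr <| Real.exp_le_one_iff.mpr <|
    mul_nonpos_of_nonpos_of_nonneg (neg_nonpos.mpr hs) (hg i).le
  simp only [Pi.smul_apply, Pi.mul_apply, Pi.sub_apply, Pi.inv_apply, Pi.one_apply,
    Pi.zero_apply, Function.comp_apply, smul_eq_mul]
  positivity

lemma exp_smul_mul_add_two_smul_one_add_inv_mul_exp_smul_sub (hC : C.PosDef)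
    (hΓ : Γ = C⁻¹ + (1 / 2 : ℝ) • 1) (F : Matrix n n ℝ) (t : ℝ) :
    NormedSpace.exp (t • Γ) * (F + ((2 : ℝ) • 1 + C)⁻¹) * NormedSpace.exp (t • Γ) -
        ((2 : ℝ) • 1 + C)⁻¹ =
      NormedSpace.exp (t • Γ) * (F + (1 / 2 : ℝ) •
        (Γ⁻¹ * C⁻¹ * (1 - NormedSpace.exp ((-(2 * t)) • Γ)))) * NormedSpace.exp (t • Γ) := by
  have hexp : NormedSpace.exp ((-(2 * t)) • Γ) =
      NormedSpace.exp ((-t) • Γ) * NormedSpace.exp ((-t) • Γ) := by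
    rw [exp_smul_mul_exp_smul, ← neg_add, two_mul]
  rw [hexp, ← smul_mul_assoc, ← hC.two_smul_one_add_inv_eq hΓ,
    (hC.commute_exp_smul_two_smul_one_add_inv hΓ t).mul_add_mul_one_sub_mul_self]
  all_goals
    rw [exp_smul_mul_exp_smul]
    simp only [add_neg_cancel, neg_add_cancel, zero_smul, NormedSpace.exp_zero]

end PosDef

end Matrix

theorem wfr_exact_covariance_error_closed_form_general
    (d : ℕ)
    (Cπ : Matrix (Fin d) (Fin d) ℝ) (hCπ : Cπ.PosDef)
    (Γ : Matrix (Fin d) (Fin d) ℝ) (hΓ : Γ = Cπ⁻¹ + (1 / 2 : ℝ) • 1)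
    (γ : ℝ) (hγ : 0 < γ)
    (E₀ : Matrix (Fin d) (Fin d) ℝ) (hE₀ : E₀.PosDef)
    (E : ℕ → Matrix (Fin d) (Fin d) ℝ)
    (hE0 : E 0 = E₀)
    (hErec : ∀ n, E (n + 1) =
      (NormedSpace.exp (γ • Γ) * ((E n)⁻¹ + ((2 : ℝ) • 1 + Cπ)⁻¹) *
        NormedSpace.exp (γ • Γ) - ((2 : ℝ) • 1 + Cπ)⁻¹)⁻¹) :
    ∀ n : ℕ,
      IsUnit (E n) ∧
      IsUnit (NormedSpace.exp (γ • Γ) * ((E n)⁻¹ + ((2 : ℝ) • 1 + Cπ)⁻¹) *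
        NormedSpace.exp (γ • Γ) - ((2 : ℝ) • 1 + Cπ)⁻¹) ∧
      IsUnit (E₀⁻¹ + (1 / 2 : ℝ) •
        (Γ⁻¹ * Cπ⁻¹ * (1 - NormedSpace.exp ((-(2 * (n : ℝ) * γ)) • Γ)))) ∧
      E n = NormedSpace.exp ((-((n : ℝ) * γ)) • Γ) *
        (E₀⁻¹ + (1 / 2 : ℝ) •
          (Γ⁻¹ * Cπ⁻¹ * (1 - NormedSpace.exp ((-(2 * (n : ℝ) * γ)) • Γ))))⁻¹ *
        NormedSpace.exp ((-((n : ℝ) * γ)) • Γ) := by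
  set B := ((2 : ℝ) • (1 : Matrix (Fin d) (Fin d) ℝ) + Cπ)⁻¹
  have hG (m : ℕ) : (E₀⁻¹ + (1 / 2 : ℝ) •
      (Γ⁻¹ * Cπ⁻¹ * (1 - NormedSpace.exp ((-(2 * (m : ℝ) * γ)) • Γ)))).PosDef :=
    hE₀.inv.add_posSemidef <|
      hCπ.posSemidef_half_smul_inv_mul_inv_mul_one_sub_exp hΓ (by positivity)
  have hconj (m : ℕ) :
      NormedSpace.exp (γ • Γ) ^ m * ((E 0)⁻¹ + B) * NormedSpace.exp (γ • Γ) ^ m - B =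
        NormedSpace.exp (((m : ℝ) * γ) • Γ) * (E₀⁻¹ + (1 / 2 : ℝ) •
          (Γ⁻¹ * Cπ⁻¹ * (1 - NormedSpace.exp ((-(2 * (m : ℝ) * γ)) • Γ)))) *
          NormedSpace.exp (((m : ℝ) * γ) • Γ) := by
    rw [hE0, ← exp_nsmul, ← Nat.cast_smul_eq_nsmul ℝ, smul_smul,
      hCπ.exp_smul_mul_add_two_smul_one_add_inv_mul_exp_smul_sub hΓ, mul_assoc 2]
  have hunit (m : ℕ) :
      IsUnit (NormedSpace.exp (γ • Γ) ^ m * ((E 0)⁻¹ + B) * NormedSpace.exp (γ • Γ) ^ m - B) := by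
    rw [hconj]
    exact ((isUnit_exp _).mul (hG m).isUnit).mul (isUnit_exp _)
  have hE := eq_inv_pow_mul_inv_add_mul_pow_sub (hE0 ▸ hE₀.isUnit) hErec hunit
  intro m
  refine ⟨?_, ?_, (hG m).isUnit, ?_⟩
  · rw [hE m]
    exact isUnit_nonsing_inv_iff.mpr (hunit m)
  · rw [hE m, pow_mul_inv_add_mul_pow_sub _ _ _ _ (hunit m)]
    exact hunit (m + 1)
  · rw [hE m, hconj, Matrix.mul_inv_rev, Matrix.mul_inv_rev, inv_exp_smul, ← mul_assoc]

/-- Closed form of the covariance error `E_n = C_{nγ} − C_π` of the exact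
Wasserstein–Fisher–Rao flow between Gaussians, with `Ω = (1/2)Γ⁻¹`. -/
theorem wfr_exact_covariance_error_closed_form
    (d : ℕ) (hd : 1 ≤ d)
    (Cπ : Matrix (Fin d) (Fin d) ℝ) (hCπ : Cπ.PosDef)
    (Γ : Matrix (Fin d) (Fin d) ℝ) (hΓ : Γ = Cπ⁻¹ + (1 / 2 : ℝ) • 1)
    (γ : ℝ) (hγ : 0 < γ)
    (E₀ : Matrix (Fin d) (Fin d) ℝ) (hE₀ : E₀.PosDef)
    (E : ℕ → Matrix (Fin d) (Fin d) ℝ)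
    (hE0 : E 0 = E₀)
    (hErec : ∀ n, E (n + 1) =
      (NormedSpace.exp (γ • Γ) * ((E n)⁻¹ + ((2 : ℝ) • 1 + Cπ)⁻¹) *
        NormedSpace.exp (γ • Γ) - ((2 : ℝ) • 1 + Cπ)⁻¹)⁻¹) :
    ∀ n : ℕ,
      IsUnit (E n) ∧
      IsUnit (NormedSpace.exp (γ • Γ) * ((E n)⁻¹ + ((2 : ℝ) • 1 + Cπ)⁻¹) *
        NormedSpace.exp (γ • Γ) - ((2 : ℝ) • 1 + Cπ)⁻¹) ∧
      IsUnit (E₀⁻¹ + (1 / 2 : ℝ) •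
        (Γ⁻¹ * Cπ⁻¹ * (1 - NormedSpace.exp ((-(2 * (n : ℝ) * γ)) • Γ)))) ∧
      E n = NormedSpace.exp ((-((n : ℝ) * γ)) • Γ) *
        (E₀⁻¹ + (1 / 2 : ℝ) •
          (Γ⁻¹ * Cπ⁻¹ * (1 - NormedSpace.exp ((-(2 * (n : ℝ) * γ)) • Γ))))⁻¹ *
        NormedSpace.exp ((-((n : ℝ) * γ)) • Γ) :=
  wfr_exact_covariance_error_closed_form_general d Cπ hCπ Γ hΓ γ hγ E₀ hE₀ E hE0 hErec
end

section
/- Let d ≥ 1, let C_π be a symmetric positive definite d×d real matrix, set Γ := C_π^{-1} + (1/2)I, let γ > 0, and let E_0 be symmetric positive definite. Define the sequence (E_n^β) by E_0^β := E_0 and the recursion E_{n+1}^β = ( e^{Γγ}(E_n^β)^{-1}e^{Γγ} + (e^{γ} − 1)C_π^{-1} )^{-1}. Then for every n ≥ 0 this recursion is well defined and E_n^β = e^{−nγΓ} ( E_0^{-1} + (1 − e^{γ})( I − e^{2γΓ} )^{-1} C_π^{-1}( I − e^{−2nγΓ} ) )^{-1} e^{−nγΓ}; that is, E_n^β = e^{−nγΓ}(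 E_0^{-1} + Ω^β C_π^{-1}(I − e^{−2nγΓ}) )^{-1} e^{−nγΓ} with Ω^β := (1 − e^{γ})(I − e^{2γΓ})^{-1}. (This is the closed form of the covariance error of the Wasserstein-then-Fisher–Rao splitting scheme between Gaussians after n steps of size γ.) -/
/-!
Pass to the precisions `Pₙ := (Eₙᵝ)⁻¹`: the recursion becomes affine,
`Pₙ₊₁ = e^{γΓ} Pₙ e^{γΓ} + (e^γ - 1) C_π⁻¹`. Since `C_π⁻¹` commutes with `Γ`, conjugating by
`e^{-nγΓ}` unrolls it into `P₀ + (e^γ - 1) C_π⁻¹ ∑_{k=1}^{n} e^{-2kγΓ}`, and this geometric sum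
equals `-(I - e^{2γΓ})⁻¹ (I - e^{-2nγΓ})` because `Γ ≻ 0` makes `I - e^{2γΓ}` invertible.
Positive definiteness of every `Eₙᵝ`, propagated along the recursion, makes all inverses genuine.
-/

open Matrix NormedSpace

namespace Matrix

variable {ι : Type*} [Fintype ι] [DecidableEq ι]

-- The L² operator norm is the normed-algebra structure compatible with the matrix CFC instance.
open scoped Matrix.Norms.L2Operator in
theorem PosDef.isUnit_one_sub_exp {A : Matrix ι ι ℝ} (hA : A.PosDef) : IsUnit (1 - exp A) := by
  have hsa : IsSelfAdjoint A := hA.1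
  rw [← CFC.real_exp_eq_normedSpace_exp hsa, ← cfc_one ℝ A hsa, ← cfc_sub 1 Real.exp A,
    isUnit_cfc_iff _ _ (by fun_prop) hsa, hA.1.spectrum_real_eq_range_eigenvalues]
  rintro _ ⟨i, rfl⟩
  simpa [sub_eq_zero] using (Real.one_lt_exp_iff.2 (hA.eigenvalues_pos i)).ne

section OneParameterGroup

variable (Γ : Matrix ι ι ℝ)

theorem exp_smul_mul_exp_smul_s7 (s t : ℝ) : exp (s • Γ) * exp (t • Γ) = exp ((s + t) • Γ) := by
  rw [add_smul, Matrix.exp_add_of_commute _ _ ((Commute.refl Γ).smul_left s |>.smul_right t)]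

theorem inv_exp_smul_s7 (t : ℝ) : (exp (t • Γ))⁻¹ = exp ((-t) • Γ) := by
  rw [neg_smul, Matrix.exp_neg]

theorem exp_neg_smul_conj_exp_smul (X : Matrix ι ι ℝ) (t : ℝ) :
    exp ((-t) • Γ) * (exp (t • Γ) * X * exp (t • Γ)) * exp ((-t) • Γ) = X := by
  simp only [← mul_assoc, exp_smul_mul_exp_smul_s7, neg_add_cancel, zero_smul, exp_zero, one_mul]
  rw [mul_assoc, exp_smul_mul_exp_smul_s7, add_neg_cancel, zero_smul, exp_zero, mul_one]

theorem PosDef.exp_smul_conj {X : Matrix ι ι ℝ} (hX : X.PosDef) (hΓ : Γ.IsHermitian) (t : ℝ) :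
    (exp (t • Γ) * X * exp (t • Γ)).PosDef := by
  have hG : star (exp (t • Γ)) = exp (t • Γ) := (hΓ.smul (IsSelfAdjoint.all t)).exp.eq
  simpa only [hG] using (IsUnit.posDef_star_right_conjugate_iff (isUnit_exp (t • Γ))).2 hX

end OneParameterGroup

section Recurrence

variable (Γ K : Matrix ι ι ℝ) {γ : ℝ}

theorem inv_one_sub_exp_mul_mul_one_sub_exp_succ (hK : Commute K Γ)
    (hW : IsUnit (1 - exp ((2 * γ) • Γ))) (x : ℝ) :
    (1 - exp ((2 * γ) • Γ))⁻¹ * K * (1 - exp ((-(2 * (x + 1) * γ)) • Γ)) =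
      (1 - exp ((2 * γ) • Γ))⁻¹ * K * (1 - exp ((-(2 * x * γ)) • Γ)) -
        exp ((-((x + 1) * γ)) • Γ) * K * exp ((-((x + 1) * γ)) • Γ) := by
  set W := 1 - exp ((2 * γ) • Γ)
  have hKG : ∀ t : ℝ, Commute K (exp (t • Γ)) := fun t => (hK.smul_right t).exp_right
  have hKW : K * W = W * K := ((Commute.one_right K).sub_right (hKG _)).eq
  have hsplit : exp ((-(2 * (x + 1) * γ)) • Γ) - exp ((-(2 * x * γ)) • Γ) =
      W * exp ((-(2 * (x + 1) * γ)) • Γ) := by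
    rw [sub_mul, one_mul, exp_smul_mul_exp_smul_s7]
    ring_nf
  have hconj : exp ((-((x + 1) * γ)) • Γ) * K * exp ((-((x + 1) * γ)) • Γ) =
      K * exp ((-(2 * (x + 1) * γ)) • Γ) := by
    rw [← (hKG _).eq, mul_assoc, exp_smul_mul_exp_smul_s7]
    ring_nf
  calc W⁻¹ * K * (1 - exp ((-(2 * (x + 1) * γ)) • Γ))
      = W⁻¹ * K * (1 - exp ((-(2 * x * γ)) • Γ)) -
          W⁻¹ * K * (exp ((-(2 * (x + 1) * γ)) • Γ) - exp ((-(2 * x * γ)) • Γ)) := by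
        noncomm_ring
    _ = W⁻¹ * K * (1 - exp ((-(2 * x * γ)) • Γ)) - K * exp ((-(2 * (x + 1) * γ)) • Γ) := by
        rw [hsplit, ← mul_assoc, mul_assoc W⁻¹ K W, hKW, ← mul_assoc,
          nonsing_inv_mul _ ((isUnit_iff_isUnit_det W).1 hW), one_mul]
    _ = _ := by rw [hconj]

theorem eq_of_exp_conj_add_smul_recurrence (hK : Commute K Γ)
    (hW : IsUnit (1 - exp ((2 * γ) • Γ))) (c : ℝ) (P : ℕ → Matrix ι ι ℝ)
    (hP : ∀ k, P (k + 1) = exp (γ • Γ) * P k * exp (γ • Γ) + c • K) (k : ℕ) :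
    P k = exp (((k : ℝ) * γ) • Γ) *
      (P 0 - c • ((1 - exp ((2 * γ) • Γ))⁻¹ * K * (1 - exp ((-(2 * (k : ℝ) * γ)) • Γ)))) *
        exp (((k : ℝ) * γ) • Γ) := by
  induction k with
  | zero => simp
  | succ k ih =>
    set M := P 0 - c • ((1 - exp ((2 * γ) • Γ))⁻¹ * K * (1 - exp ((-(2 * (k : ℝ) * γ)) • Γ)))
    have hshift : exp (γ • Γ) * (exp (((k : ℝ) * γ) • Γ) * M * exp (((k : ℝ) * γ) • Γ)) *
        exp (γ • Γ) = exp ((((k : ℝ) + 1) * γ) • Γ) * M * exp ((((k : ℝ) + 1) * γ) • Γ) := by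
      simp only [← mul_assoc, exp_smul_mul_exp_smul_s7]
      rw [mul_assoc _ _ (exp (γ • Γ)), exp_smul_mul_exp_smul_s7]
      ring_nf
    have hK' : K = exp ((((k : ℝ) + 1) * γ) • Γ) *
        (exp ((-(((k : ℝ) + 1) * γ)) • Γ) * K * exp ((-(((k : ℝ) + 1) * γ)) • Γ)) *
          exp ((((k : ℝ) + 1) * γ) • Γ) := by
      simpa using (exp_neg_smul_conj_exp_smul Γ K (-(((k : ℝ) + 1) * γ))).symm
    rw [hP k, ih, hshift]
    push_cast
    rw [inv_one_sub_exp_mul_mul_one_sub_exp_succ Γ K hK hW]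
    conv_lhs => rw [hK']
    simp only [M, add_mul, mul_sub, sub_mul, smul_sub, mul_smul_comm, smul_mul_assoc]
    abel

end Recurrence

end Matrix

theorem wfr_split_WFR_covariance_error_closed_form_general
    (d : ℕ)
    (Cπ : Matrix (Fin d) (Fin d) ℝ) (hCπ : Cπ.PosDef)
    (Γ : Matrix (Fin d) (Fin d) ℝ) (hΓ : Γ = Cπ⁻¹ + (1 / 2 : ℝ) • 1)
    (γ : ℝ) (hγ : 0 < γ)
    (E₀ : Matrix (Fin d) (Fin d) ℝ) (hE₀ : E₀.PosDef)
    (Ωβ : Matrix (Fin d) (Fin d) ℝ)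
    (hΩβ : Ωβ = (1 - Real.exp γ) • (1 - NormedSpace.exp ((2 * γ) • Γ))⁻¹)
    (Eβ : ℕ → Matrix (Fin d) (Fin d) ℝ)
    (hE0 : Eβ 0 = E₀)
    (hErec : ∀ n, Eβ (n + 1) =
      (NormedSpace.exp (γ • Γ) * (Eβ n)⁻¹ * NormedSpace.exp (γ • Γ)
        + (Real.exp γ - 1) • Cπ⁻¹)⁻¹) :
    ∀ n : ℕ,
      IsUnit (Eβ n) ∧
      IsUnit (NormedSpace.exp (γ • Γ) * (Eβ n)⁻¹ * NormedSpace.exp (γ • Γ)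
        + (Real.exp γ - 1) • Cπ⁻¹) ∧
      IsUnit (E₀⁻¹ + (1 - Real.exp γ) •
        ((1 - NormedSpace.exp ((2 * γ) • Γ))⁻¹ * Cπ⁻¹ *
          (1 - NormedSpace.exp ((-(2 * (n : ℝ) * γ)) • Γ)))) ∧
      Eβ n = NormedSpace.exp ((-((n : ℝ) * γ)) • Γ) *
        (E₀⁻¹ + Ωβ * Cπ⁻¹ * (1 - NormedSpace.exp ((-(2 * (n : ℝ) * γ)) • Γ)))⁻¹ *
        NormedSpace.exp ((-((n : ℝ) * γ)) • Γ) := by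
  have hΓpd : Γ.PosDef := hΓ ▸ hCπ.inv.add (PosDef.one.smul (by norm_num))
  have hK : Commute Cπ⁻¹ Γ := hΓ ▸ (Commute.refl _).add_right ((Commute.one_right _).smul_right _)
  have hc : 0 < Real.exp γ - 1 := sub_pos.2 (Real.one_lt_exp_iff.2 hγ)
  have hstep : ∀ {E : Matrix (Fin d) (Fin d) ℝ}, E.PosDef →
      (exp (γ • Γ) * E⁻¹ * exp (γ • Γ) + (Real.exp γ - 1) • Cπ⁻¹).PosDef :=
    fun hE => (hE.inv.exp_smul_conj Γ hΓpd.1 γ).add (hCπ.inv.smul hc)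
  have hpos : ∀ n, (Eβ n).PosDef := by
    intro n
    induction n with
    | zero => rwa [hE0]
    | succ n ih => rw [hErec n]; exact (hstep ih).inv
  have hprec := eq_of_exp_conj_add_smul_recurrence Γ Cπ⁻¹ hK
    (hΓpd.smul (by positivity : 0 < 2 * γ)).isUnit_one_sub_exp _ (fun n => (Eβ n)⁻¹) fun n => by
      rw [hErec n, nonsing_inv_nonsing_inv _ ((hstep (hpos n)).isUnit.map detMonoidHom)]
  intro n
  set A := E₀⁻¹ + (1 - Real.exp γ) • ((1 - exp ((2 * γ) • Γ))⁻¹ * Cπ⁻¹ *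
    (1 - exp ((-(2 * (n : ℝ) * γ)) • Γ))) with hA
  have hEinv : (Eβ n)⁻¹ = exp (((n : ℝ) * γ) • Γ) * A * exp (((n : ℝ) * γ) • Γ) := by
    rw [hprec n, hE0, hA]
    congr 2
    module
  refine ⟨(hpos n).isUnit, (hstep (hpos n)).isUnit, ?_, ?_⟩
  · rw [← exp_neg_smul_conj_exp_smul Γ A, ← hEinv]
    exact ((Matrix.isUnit_exp _).mul (hpos n).inv.isUnit).mul (Matrix.isUnit_exp _)
  · rw [hΩβ, smul_mul_assoc, smul_mul_assoc, ← inv_exp_smul_s7, ← Matrix.mul_inv_rev,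
      ← Matrix.mul_inv_rev, ← mul_assoc, ← hEinv,
      nonsing_inv_nonsing_inv _ ((hpos n).isUnit.map detMonoidHom)]

/-- Closed form of the covariance error of the Wasserstein-then-Fisher–Rao
splitting scheme between Gaussians after `n` steps of size `γ`, with
`Ω^β = (1 − e^γ)(I − e^{2γΓ})⁻¹`. -/
theorem wfr_split_WFR_covariance_error_closed_form
    (d : ℕ) (hd : 1 ≤ d)
    (Cπ : Matrix (Fin d) (Fin d) ℝ) (hCπ : Cπ.PosDef)
    (Γ : Matrix (Fin d) (Fin d) ℝ) (hΓ : Γ = Cπ⁻¹ + (1 / 2 : ℝ) • 1)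
    (γ : ℝ) (hγ : 0 < γ)
    (E₀ : Matrix (Fin d) (Fin d) ℝ) (hE₀ : E₀.PosDef)
    (Ωβ : Matrix (Fin d) (Fin d) ℝ)
    (hΩβ : Ωβ = (1 - Real.exp γ) • (1 - NormedSpace.exp ((2 * γ) • Γ))⁻¹)
    (Eβ : ℕ → Matrix (Fin d) (Fin d) ℝ)
    (hE0 : Eβ 0 = E₀)
    (hErec : ∀ n, Eβ (n + 1) =
      (NormedSpace.exp (γ • Γ) * (Eβ n)⁻¹ * NormedSpace.exp (γ • Γ)
        + (Real.exp γ - 1) • Cπ⁻¹)⁻¹) :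
    ∀ n : ℕ,
      IsUnit (Eβ n) ∧
      IsUnit (NormedSpace.exp (γ • Γ) * (Eβ n)⁻¹ * NormedSpace.exp (γ • Γ)
        + (Real.exp γ - 1) • Cπ⁻¹) ∧
      IsUnit (E₀⁻¹ + (1 - Real.exp γ) •
        ((1 - NormedSpace.exp ((2 * γ) • Γ))⁻¹ * Cπ⁻¹ *
          (1 - NormedSpace.exp ((-(2 * (n : ℝ) * γ)) • Γ)))) ∧
      Eβ n = NormedSpace.exp ((-((n : ℝ) * γ)) • Γ) *
        (E₀⁻¹ + Ωβ * Cπ⁻¹ * (1 - NormedSpace.exp ((-(2 * (n : ℝ) * γ)) • Γ)))⁻¹ *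
        NormedSpace.exp ((-((n : ℝ) * γ)) • Γ) :=
  wfr_split_WFR_covariance_error_closed_form_general d Cπ hCπ Γ hΓ γ hγ E₀ hE₀ Ωβ hΩβ Eβ hE0 hErec
end

section
/- Let d ≥ 1, let C_π be a symmetric positive definite d×d real matrix, set Γ := C_π^{-1} + (1/2)I, let γ > 0, let n ≥ 1, and let E_0 be symmetric positive definite. Define Ω := (1/2)Γ^{-1}, Ω^β := (1 − e^{γ})(I − e^{2γΓ})^{-1}, Ω^α := (1 − e^{γ})(e^{−2γC_π^{-1}} − e^{γ}I)^{-1}, and J_n(B) := e^{−nγΓ} ( E_0^{-1} + B C_π^{-1}( I − e^{−2nγΓ} ) )^{-1} e^{−nγΓ}. Then each of the matrices E_n := J_n(Ω), E_n^β := J_n(Ω^β) and E_n^α := J_n(Ω^α) is well defined (the inverted matrices are invertible) and symmetric positive definite. -/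
/-!
Diagonalise `Cπ⁻¹ = U diag(λ) Uᵀ` with `U` orthogonal and `λ > 0`. Since `w ↦ U diag(w) Uᵀ` is an
algebra homomorphism commuting with `exp`, every matrix built from `Cπ` alone is of this
form: `Γ`, `Ω`, `Ωβ`, `Ωα` and `1 - e^{-2nγΓ}` have weights `λ + 1/2`, `(2(λ + 1/2))⁻¹`,
`(1 - e^γ)/(1 - e^{2γ(λ+1/2)})`, `(1 - e^γ)/(e^{-2γλ} - e^γ)` and `1 - e^{-2nγ(λ+1/2)}`.
For `γ > 0` the two denominators are negative, as is `1 - e^γ`, so each `B` has positive weights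
and `B Cπ⁻¹ (1 - e^{-2nγΓ}) ⪰ 0`. Hence `E₀⁻¹ + B Cπ⁻¹ (1 - e^{-2nγΓ}) ≻ 0`, and conjugating its
inverse by the positive definite `e^{-nγΓ}` keeps it positive definite.
-/

open Matrix
open scoped ComplexOrder

namespace Matrix

variable {n : Type*} [Fintype n] [DecidableEq n]

theorem PosDef.conj_inv_add_posSemidef {𝕜 : Type*} [RCLike 𝕜] {E K P : Matrix n n 𝕜}
    (hE : E.PosDef) (hK : K.PosSemidef) (hP : P.PosDef) : (P * (E⁻¹ + K)⁻¹ * P).PosDef := by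
  nth_rw 2 [← hP.isHermitian.eq]
  exact (IsUnit.posDef_star_right_conjugate_iff hP.isUnit).2 (hE.inv.add_posSemidef hK).inv

noncomputable def conjDiagonal (U : unitary (Matrix n n ℝ)) : (n → ℝ) →ₐ[ℝ] Matrix n n ℝ :=
  (Unitary.conjStarAlgAut ℝ _ U).toAlgEquiv.toAlgHom.comp (diagonalAlgHom ℝ)

variable (U : unitary (Matrix n n ℝ)) {w : n → ℝ}

theorem conjDiagonal_apply (w : n → ℝ) :
    conjDiagonal U w = U * diagonal w * star (U : Matrix n n ℝ) := rfl

theorem IsHermitian.eq_conjDiagonal_eigenvalues {A : Matrix n n ℝ} (hA : A.IsHermitian) :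
    A = conjDiagonal hA.eigenvectorUnitary hA.eigenvalues := by
  rw [conjDiagonal_apply]
  simpa [RCLike.ofReal_real_eq_id] using hA.spectral_theorem

theorem isUnit_conjDiagonal (hw : ∀ i, w i ≠ 0) : IsUnit (conjDiagonal U w) :=
  (Pi.isUnit_iff.2 fun i => (hw i).isUnit).map _

theorem inv_conjDiagonal (hw : ∀ i, w i ≠ 0) : (conjDiagonal U w)⁻¹ = conjDiagonal U w⁻¹ :=
  inv_eq_left_inv <| by
    rw [← map_mul, ← map_one (conjDiagonal U)]
    congr 1
    ext i
    exact inv_mul_cancel₀ (hw i)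

theorem exp_conjDiagonal (w : n → ℝ) :
    NormedSpace.exp (conjDiagonal U w) = conjDiagonal U (Real.exp ∘ w) := by
  have hU : (U : Matrix n n ℝ)⁻¹ = star (U : Matrix n n ℝ) :=
    inv_eq_right_inv (Unitary.mul_star_self_of_mem U.2)
  rw [conjDiagonal_apply, ← hU, Matrix.exp_conj _ _ Unitary.isUnit_coe, exp_diagonal, hU,
    Pi.exp_def, Real.exp_eq_exp_ℝ]
  rfl

theorem posDef_conjDiagonal_iff : (conjDiagonal U w).PosDef ↔ ∀ i, 0 < w i := by
  rw [conjDiagonal_apply, IsUnit.posDef_star_right_conjugate_iff Unitary.isUnit_coe,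
    posDef_diagonal_iff]

theorem posSemidef_conjDiagonal_iff : (conjDiagonal U w).PosSemidef ↔ ∀ i, 0 ≤ w i := by
  rw [conjDiagonal_apply, IsUnit.posSemidef_star_right_conjugate_iff Unitary.isUnit_coe,
    posSemidef_diagonal_iff]

end Matrix

theorem wfr_covariance_errors_posDef_general
    (d : ℕ)
    (Cπ : Matrix (Fin d) (Fin d) ℝ) (hCπ : Cπ.PosDef)
    (Γ : Matrix (Fin d) (Fin d) ℝ) (hΓ : Γ = Cπ⁻¹ + (1 / 2 : ℝ) • 1)
    (γ : ℝ) (hγ : 0 < γ)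
    (n : ℕ)
    (E₀ : Matrix (Fin d) (Fin d) ℝ) (hE₀ : E₀.PosDef)
    (Ω Ωβ Ωα : Matrix (Fin d) (Fin d) ℝ)
    (hΩ : Ω = (1 / 2 : ℝ) • Γ⁻¹)
    (hΩβ : Ωβ = (1 - Real.exp γ) • (1 - NormedSpace.exp ((2 * γ) • Γ))⁻¹)
    (hΩα : Ωα = (1 - Real.exp γ) •
      (NormedSpace.exp ((-(2 * γ)) • Cπ⁻¹) - Real.exp γ • (1 : Matrix (Fin d) (Fin d) ℝ))⁻¹)
    (J : Matrix (Fin d) (Fin d) ℝ → Matrix (Fin d) (Fin d) ℝ)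
    (hJ : ∀ B, J B = NormedSpace.exp ((-((n : ℝ) * γ)) • Γ) *
      (E₀⁻¹ + B * Cπ⁻¹ * (1 - NormedSpace.exp ((-(2 * (n : ℝ) * γ)) • Γ)))⁻¹ *
      NormedSpace.exp ((-((n : ℝ) * γ)) • Γ)) :
    IsUnit (1 - NormedSpace.exp ((2 * γ) • Γ)) ∧
    IsUnit (NormedSpace.exp ((-(2 * γ)) • Cπ⁻¹)
      - Real.exp γ • (1 : Matrix (Fin d) (Fin d) ℝ)) ∧
    ∀ B ∈ ({Ω, Ωβ, Ωα} : Set (Matrix (Fin d) (Fin d) ℝ)),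
      IsUnit (E₀⁻¹ + B * Cπ⁻¹ * (1 - NormedSpace.exp ((-(2 * (n : ℝ) * γ)) • Γ))) ∧
      (J B).PosDef := by
  obtain ⟨U, l, hl, hA⟩ : ∃ (U : unitary (Matrix (Fin d) (Fin d) ℝ)) (l : Fin d → ℝ),
      (∀ i, 0 < l i) ∧ Cπ⁻¹ = conjDiagonal U l :=
    ⟨_, _, hCπ.inv.eigenvalues_pos, hCπ.inv.isHermitian.eq_conjDiagonal_eigenvalues⟩
  set φ := conjDiagonal U
  set μ : Fin d → ℝ := fun i => l i + 1 / 2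
  have hμ : ∀ i, 0 < μ i := fun i => add_pos (hl i) one_half_pos
  have hΓ' : Γ = φ μ := by
    rw [hΓ, hA, ← map_one φ, ← map_smul, ← map_add]; congr 1; ext i; simp [μ]
  have hexp : ∀ t : ℝ, NormedSpace.exp (t • Γ) = φ fun i => Real.exp (t * μ i) := fun t => by
    rw [hΓ', ← map_smul, exp_conjDiagonal]; rfl
  have hβ : 1 - NormedSpace.exp ((2 * γ) • Γ) = φ fun i => 1 - Real.exp (2 * γ * μ i) := by
    rw [hexp, ← map_one φ, ← map_sub]; rfl
  have hα : NormedSpace.exp ((-(2 * γ)) • Cπ⁻¹) - Real.exp γ • (1 : Matrix (Fin d) (Fin d) ℝ) =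
      φ fun i => Real.exp (-(2 * γ) * l i) - Real.exp γ := by
    rw [hA, ← map_smul, exp_conjDiagonal, ← map_one φ, ← map_smul, ← map_sub]
    congr 1; ext i; simp
  have hT : 1 - NormedSpace.exp ((-(2 * (n : ℝ) * γ)) • Γ) =
      φ fun i => 1 - Real.exp (-(2 * n * γ) * μ i) := by
    rw [hexp, ← map_one φ, ← map_sub]; rfl
  have he : 1 - Real.exp γ < 0 := sub_neg.2 (Real.one_lt_exp_iff.2 hγ)
  have hβ_neg : ∀ i, 1 - Real.exp (2 * γ * μ i) < 0 := fun i =>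
    sub_neg.2 (Real.one_lt_exp_iff.2 (by nlinarith [hμ i]))
  have hα_neg : ∀ i, Real.exp (-(2 * γ) * l i) - Real.exp γ < 0 := fun i =>
    sub_neg.2 (Real.exp_lt_exp.2 (by nlinarith [hl i]))
  have hT_nonneg : ∀ i, 0 ≤ 1 - Real.exp (-(2 * n * γ) * μ i) := fun i =>
    sub_nonneg.2 <| Real.exp_le_one_iff.2 <|
      mul_nonpos_of_nonpos_of_nonneg (by simp only [neg_nonpos]; positivity) (hμ i).le
  have key : ∀ B b, B = φ b → (∀ i, 0 < b i) →
      IsUnit (E₀⁻¹ + B * Cπ⁻¹ * (1 - NormedSpace.exp ((-(2 * (n : ℝ) * γ)) • Γ))) ∧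
        (J B).PosDef := by
    rintro _ b rfl hb
    have hK : (φ b * Cπ⁻¹ * (1 - NormedSpace.exp ((-(2 * (n : ℝ) * γ)) • Γ))).PosSemidef := by
      rw [hA, hT, ← map_mul, ← map_mul, posSemidef_conjDiagonal_iff]
      exact fun i => mul_nonneg (mul_pos (hb i) (hl i)).le (hT_nonneg i)
    have hP := (posDef_conjDiagonal_iff U).2 fun i => Real.exp_pos (-(n * γ) * μ i)
    rw [hJ, hexp (-(n * γ))]
    exact ⟨(hE₀.inv.add_posSemidef hK).isUnit, hE₀.conj_inv_add_posSemidef hK hP⟩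
  refine ⟨hβ ▸ isUnit_conjDiagonal U fun i => (hβ_neg i).ne,
    hα ▸ isUnit_conjDiagonal U fun i => (hα_neg i).ne, ?_⟩
  rintro B (rfl | rfl | rfl)
  · exact key _ _ (by rw [hΩ, hΓ', inv_conjDiagonal U fun i => (hμ i).ne', ← map_smul]; rfl)
      fun i => mul_pos one_half_pos (inv_pos.2 (hμ i))
  · exact key _ _ (by rw [hΩβ, hβ, inv_conjDiagonal U fun i => (hβ_neg i).ne, ← map_smul]; rfl)
      fun i => mul_pos_of_neg_of_neg he (inv_lt_zero.2 (hβ_neg i))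
  · exact key _ _ (by rw [hΩα, hα, inv_conjDiagonal U fun i => (hα_neg i).ne, ← map_smul]; rfl)
      fun i => mul_pos_of_neg_of_neg he (inv_lt_zero.2 (hα_neg i))

/-- The covariance errors `J_n(Ω)`, `J_n(Ω^β)`, `J_n(Ω^α)` of the exact
WFR flow, the W-FR splitting and the FR-W splitting between Gaussians are well defined and
symmetric positive definite when `E₀ ≻ 0`. -/
theorem wfr_covariance_errors_posDef
    (d : ℕ) (hd : 1 ≤ d)
    (Cπ : Matrix (Fin d) (Fin d) ℝ) (hCπ : Cπ.PosDef)
    (Γ : Matrix (Fin d) (Fin d) ℝ) (hΓ : Γ = Cπ⁻¹ + (1 / 2 : ℝ) • 1)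
    (γ : ℝ) (hγ : 0 < γ)
    (n : ℕ) (hn : 1 ≤ n)
    (E₀ : Matrix (Fin d) (Fin d) ℝ) (hE₀ : E₀.PosDef)
    (Ω Ωβ Ωα : Matrix (Fin d) (Fin d) ℝ)
    (hΩ : Ω = (1 / 2 : ℝ) • Γ⁻¹)
    (hΩβ : Ωβ = (1 - Real.exp γ) • (1 - NormedSpace.exp ((2 * γ) • Γ))⁻¹)
    (hΩα : Ωα = (1 - Real.exp γ) •
      (NormedSpace.exp ((-(2 * γ)) • Cπ⁻¹) - Real.exp γ • (1 : Matrix (Fin d) (Fin d) ℝ))⁻¹)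
    (J : Matrix (Fin d) (Fin d) ℝ → Matrix (Fin d) (Fin d) ℝ)
    (hJ : ∀ B, J B = NormedSpace.exp ((-((n : ℝ) * γ)) • Γ) *
      (E₀⁻¹ + B * Cπ⁻¹ * (1 - NormedSpace.exp ((-(2 * (n : ℝ) * γ)) • Γ)))⁻¹ *
      NormedSpace.exp ((-((n : ℝ) * γ)) • Γ)) :
    IsUnit (1 - NormedSpace.exp ((2 * γ) • Γ)) ∧
    IsUnit (NormedSpace.exp ((-(2 * γ)) • Cπ⁻¹)
      - Real.exp γ • (1 : Matrix (Fin d) (Fin d) ℝ)) ∧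
    ∀ B ∈ ({Ω, Ωβ, Ωα} : Set (Matrix (Fin d) (Fin d) ℝ)),
      IsUnit (E₀⁻¹ + B * Cπ⁻¹ * (1 - NormedSpace.exp ((-(2 * (n : ℝ) * γ)) • Γ))) ∧
      (J B).PosDef :=
  wfr_covariance_errors_posDef_general d Cπ hCπ Γ hΓ γ hγ n E₀ hE₀ Ω Ωβ Ωα hΩ hΩβ hΩα J hJ
end

section
/- Let d ≥ 1, let C_π be a symmetric positive definite d×d real matrix, set Γ := C_π^{-1} + (1/2)I, let γ > 0, let n ≥ 1, let E_0 be a symmetric invertible d×d matrix, and define Ω := (1/2)Γ^{-1}, Ω^β := (1 − e^{γ})(I − e^{2γΓ})^{-1}, Ω^α := (1 − e^{γ})(e^{−2γC_π^{-1}} − e^{γ}I)^{-1}, and J_n(B) := e^{−nγΓ} ( E_0^{-1} + B C_π^{-1}( I − e^{−2nγΓ} ) )^{-1} e^{−nγΓ}. If B ∈ {Ω, Ω^β, Ω^α} and the symmetric matrix E_0^{-1} + B C_π^{-1} is negative definite, then for every n ≥ 1 the matrix E_0^{-1} + B C_π^{-1}(I − e^{−2nγΓ}) is negative definite (in particular invertible)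 and J_n(B) is symmetric negative definite. -/
/-!
Diagonalise `C_π = U diag(μ) Uᵀ` with `U` orthogonal. Then `C_π⁻¹`, `Γ`, `e^{sΓ}` and each of
`Ω, Ω^β, Ω^α` are of the form `U diag(w) Uᵀ`, and on such matrices the algebra (products,
inverses, exponentials) is entrywise in `w`. For `γ > 0` the weights of `Ω, Ω^β, Ω^α` are
positive (for `Ω^β, Ω^α` as a quotient of two negative numbers), so `B C_π⁻¹ e^{-2nγΓ} ≻ 0`.
Hence `-(E₀⁻¹ + B C_π⁻¹ (I - e^{-2nγΓ})) = -(E₀⁻¹ + B C_π⁻¹) + B C_π⁻¹ e^{-2nγΓ} ≻ 0`, and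
`-J_n(B) = e^{-nγΓ} (-(E₀⁻¹ + B C_π⁻¹ (I - e^{-2nγΓ})))⁻¹ e^{-nγΓ}` is a congruence of a positive
definite matrix.
-/

open Matrix
open scoped ComplexOrder

namespace Matrix

variable {n 𝕜 : Type*} [Fintype n] [DecidableEq n] [RCLike 𝕜]

def unitaryDiagonal (U : unitaryGroup n 𝕜) : (n → 𝕜) →ₐ[𝕜] Matrix n n 𝕜 :=
  (Unitary.conjStarAlgAut 𝕜 (Matrix n n 𝕜) U).toAlgEquiv.toAlgHom.comp (diagonalAlgHom 𝕜)

theorem unitaryDiagonal_apply (U : unitaryGroup n 𝕜) (w : n → 𝕜) :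
    unitaryDiagonal U w = U * diagonal w * star (U : Matrix n n 𝕜) := rfl

theorem unitaryDiagonal_inv (U : unitaryGroup n 𝕜) {w : n → 𝕜} (hw : ∀ i, w i ≠ 0) :
    (unitaryDiagonal U w)⁻¹ = unitaryDiagonal U w⁻¹ := by
  refine inv_eq_right_inv ?_
  rw [← map_mul, show w * w⁻¹ = 1 from funext fun i => mul_inv_cancel₀ (hw i), map_one]

theorem exp_unitaryDiagonal (U : unitaryGroup n 𝕜) (w : n → 𝕜) :
    NormedSpace.exp (unitaryDiagonal U w) = unitaryDiagonal U (NormedSpace.exp w) := by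
  have hU : star (U : Matrix n n 𝕜) = (U : Matrix n n 𝕜)⁻¹ :=
    (inv_eq_right_inv (Unitary.mul_star_self_of_mem U.2)).symm
  simp only [unitaryDiagonal_apply, hU, exp_conj _ _ Unitary.isUnit_coe, exp_diagonal]

theorem posDef_unitaryDiagonal_iff (U : unitaryGroup n 𝕜) {w : n → 𝕜} :
    (unitaryDiagonal U w).PosDef ↔ ∀ i, 0 < w i := by
  simp [unitaryDiagonal_apply, Unitary.isUnit_coe.posDef_star_right_conjugate_iff]

theorem PosDef.exists_eq_unitaryDiagonal {A : Matrix n n 𝕜} (hA : A.PosDef) :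
    ∃ (U : unitaryGroup n 𝕜) (w : n → 𝕜), (∀ i, 0 < w i) ∧ A = unitaryDiagonal U w :=
  ⟨hA.1.eigenvectorUnitary, _, fun i => RCLike.ofReal_pos.mpr (hA.eigenvalues_pos i),
    hA.1.spectral_theorem⟩

theorem PosDef.neg_add_mul_one_sub {E M P : Matrix n n 𝕜} (hEM : (-(E + M)).PosDef)
    (hMP : (M * P).PosDef) : (-(E + M * (1 - P))).PosDef := by
  rw [show -(E + M * (1 - P)) = -(E + M) + M * P by noncomm_ring]
  exact hEM.add hMP

theorem PosDef.neg_mul_inv_mul {S X : Matrix n n 𝕜} (hS : (-S).PosDef) (hX : X.IsHermitian)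
    (hXu : IsUnit X) : (-(X * S⁻¹ * X)).PosDef := by
  have hinv : (-S)⁻¹ = -S⁻¹ := by
    have hSu : IsUnit S.det := (isUnit_iff_isUnit_det S).mp (by simpa using hS.isUnit.neg)
    exact inv_eq_right_inv (by rw [neg_mul_neg, mul_nonsing_inv _ hSu])
  have hconj : -(X * S⁻¹ * X) = X * (-S)⁻¹ * star X := by
    rw [star_eq_conjTranspose, hX.eq, hinv]
    noncomm_ring
  rw [hconj, hXu.posDef_star_right_conjugate_iff]
  exact hS.inv

theorem exp_smul_unitaryDiagonal (U : unitaryGroup n ℝ) (s : ℝ) (w : n → ℝ) :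
    NormedSpace.exp (s • unitaryDiagonal U w) = unitaryDiagonal U fun i => Real.exp (s * w i) := by
  rw [← map_smul, exp_unitaryDiagonal, Pi.exp_def, Real.exp_eq_exp_ℝ]
  rfl

end Matrix

theorem exists_pos_eq_unitaryDiagonal_of_weight {n : Type*} [Fintype n] [DecidableEq n]
    (U : unitaryGroup n ℝ) {g ν : n → ℝ} (hg : ∀ i, 0 < g i) (hν : ∀ i, 0 < ν i) {γ : ℝ}
    (hγ : 0 < γ) {B : Matrix n n ℝ}
    (hB : B = (1 / 2 : ℝ) • (unitaryDiagonal U g)⁻¹ ∨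
      B = (1 - Real.exp γ) • (1 - NormedSpace.exp ((2 * γ) • unitaryDiagonal U g))⁻¹ ∨
      B = (1 - Real.exp γ) • (NormedSpace.exp ((-(2 * γ)) • unitaryDiagonal U ν) -
        Real.exp γ • (1 : Matrix n n ℝ))⁻¹) :
    ∃ b : n → ℝ, (∀ i, 0 < b i) ∧ B = unitaryDiagonal U b := by
  have hc : 1 - Real.exp γ < 0 := sub_neg.2 (Real.one_lt_exp_iff.2 hγ)
  rcases hB with rfl | rfl | rfl
  · refine ⟨(1 / 2 : ℝ) • g⁻¹, fun i => by simpa using hg i, ?_⟩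
    rw [unitaryDiagonal_inv U fun i => (hg i).ne', map_smul]
  · have hw : ∀ i, 1 - Real.exp (2 * γ * g i) < 0 := fun i =>
      sub_neg.2 (Real.one_lt_exp_iff.2 (by have := hg i; positivity))
    refine ⟨(1 - Real.exp γ) • (1 - fun i => Real.exp (2 * γ * g i))⁻¹,
      fun i => mul_pos_of_neg_of_neg hc (inv_lt_zero.2 (hw i)), ?_⟩
    rw [exp_smul_unitaryDiagonal, ← map_one (unitaryDiagonal U), ← map_sub,
      unitaryDiagonal_inv U (w := 1 - _) fun i => (hw i).ne, map_smul]
  · have hw : ∀ i, Real.exp (-(2 * γ) * ν i) - Real.exp γ * 1 < 0 := fun i => by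
      have := Real.exp_lt_exp.2 (show -(2 * γ) * ν i < γ by nlinarith [hν i])
      linarith
    refine ⟨(1 - Real.exp γ) • ((fun i => Real.exp (-(2 * γ) * ν i)) - Real.exp γ • 1)⁻¹,
      fun i => mul_pos_of_neg_of_neg hc (inv_lt_zero.2 (hw i)), ?_⟩
    rw [exp_smul_unitaryDiagonal, ← map_one (unitaryDiagonal U), ← map_smul, ← map_sub,
      unitaryDiagonal_inv U (w := _ - Real.exp γ • 1) fun i => (hw i).ne, map_smul]

theorem wfr_covariance_errors_negDef_general
    (d : ℕ)
    (Cπ : Matrix (Fin d) (Fin d) ℝ) (hCπ : Cπ.PosDef)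
    (Γ : Matrix (Fin d) (Fin d) ℝ) (hΓ : Γ = Cπ⁻¹ + (1 / 2 : ℝ) • 1)
    (γ : ℝ) (hγ : 0 < γ)
    (E₀ : Matrix (Fin d) (Fin d) ℝ)
    (Ω Ωβ Ωα : Matrix (Fin d) (Fin d) ℝ)
    (hΩ : Ω = (1 / 2 : ℝ) • Γ⁻¹)
    (hΩβ : Ωβ = (1 - Real.exp γ) • (1 - NormedSpace.exp ((2 * γ) • Γ))⁻¹)
    (hΩα : Ωα = (1 - Real.exp γ) •
      (NormedSpace.exp ((-(2 * γ)) • Cπ⁻¹) - Real.exp γ • (1 : Matrix (Fin d) (Fin d) ℝ))⁻¹)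
    (J : ℕ → Matrix (Fin d) (Fin d) ℝ → Matrix (Fin d) (Fin d) ℝ)
    (hJ : ∀ n B, J n B = NormedSpace.exp ((-((n : ℝ) * γ)) • Γ) *
      (E₀⁻¹ + B * Cπ⁻¹ * (1 - NormedSpace.exp ((-(2 * (n : ℝ) * γ)) • Γ)))⁻¹ *
      NormedSpace.exp ((-((n : ℝ) * γ)) • Γ))
    (B : Matrix (Fin d) (Fin d) ℝ)
    (hB : B = Ω ∨ B = Ωβ ∨ B = Ωα)
    (hneg : (-(E₀⁻¹ + B * Cπ⁻¹)).PosDef) :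
    ∀ n : ℕ, 1 ≤ n →
      (-(E₀⁻¹ + B * Cπ⁻¹ * (1 - NormedSpace.exp ((-(2 * (n : ℝ) * γ)) • Γ)))).PosDef ∧
      IsUnit (E₀⁻¹ + B * Cπ⁻¹ * (1 - NormedSpace.exp ((-(2 * (n : ℝ) * γ)) • Γ))) ∧
      (-(J n B)).PosDef := by
  intro n _
  obtain ⟨U, μ, hμ, hCπU⟩ := hCπ.exists_eq_unitaryDiagonal
  have hCπinv : Cπ⁻¹ = unitaryDiagonal U μ⁻¹ :=
    hCπU ▸ unitaryDiagonal_inv U fun i => (hμ i).ne'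
  have hΓU : Γ = unitaryDiagonal U (μ⁻¹ + (1 / 2 : ℝ) • 1) := by
    rw [hΓ, hCπinv, map_add, map_smul, map_one]
  obtain ⟨b, hb, rfl⟩ : ∃ b, (∀ i, 0 < b i) ∧ B = unitaryDiagonal U b := by
    subst hΩ hΩβ hΩα
    rw [hΓU, hCπinv] at hB
    exact exists_pos_eq_unitaryDiagonal_of_weight U
      (fun i => add_pos (inv_pos.2 (hμ i)) (by norm_num)) (fun i => inv_pos.2 (hμ i)) hγ hB
  have hcorr : (unitaryDiagonal U b * Cπ⁻¹ *
      NormedSpace.exp ((-(2 * (n : ℝ) * γ)) • Γ)).PosDef := by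
    rw [hCπinv, hΓU, exp_smul_unitaryDiagonal, ← map_mul, ← map_mul, posDef_unitaryDiagonal_iff]
    exact fun i => mul_pos (mul_pos (hb i) (inv_pos.2 (hμ i))) (Real.exp_pos _)
  have hS := hneg.neg_add_mul_one_sub hcorr
  have hE : (NormedSpace.exp ((-((n : ℝ) * γ)) • Γ)).PosDef := by
    rw [hΓU, exp_smul_unitaryDiagonal, posDef_unitaryDiagonal_iff]
    exact fun i => Real.exp_pos _
  refine ⟨hS, by simpa using hS.isUnit.neg, ?_⟩
  rw [hJ]
  exact hS.neg_mul_inv_mul hE.1 hE.isUnit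

/-- If `E₀⁻¹ + B C_π⁻¹ ≺ 0` for `B ∈ {Ω, Ω^β, Ω^α}`, then for every `n ≥ 1`
the matrix `E₀⁻¹ + B C_π⁻¹(I − e^{−2nγΓ})` is negative definite and `J_n(B)` is symmetric
negative definite.  Negative definiteness of `A` is expressed as `(-A).PosDef`. -/
theorem wfr_covariance_errors_negDef
    (d : ℕ) (hd : 1 ≤ d)
    (Cπ : Matrix (Fin d) (Fin d) ℝ) (hCπ : Cπ.PosDef)
    (Γ : Matrix (Fin d) (Fin d) ℝ) (hΓ : Γ = Cπ⁻¹ + (1 / 2 : ℝ) • 1)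
    (γ : ℝ) (hγ : 0 < γ)
    (E₀ : Matrix (Fin d) (Fin d) ℝ) (hE₀s : E₀.IsSymm) (hE₀u : IsUnit E₀)
    (Ω Ωβ Ωα : Matrix (Fin d) (Fin d) ℝ)
    (hΩ : Ω = (1 / 2 : ℝ) • Γ⁻¹)
    (hΩβ : Ωβ = (1 - Real.exp γ) • (1 - NormedSpace.exp ((2 * γ) • Γ))⁻¹)
    (hΩα : Ωα = (1 - Real.exp γ) •
      (NormedSpace.exp ((-(2 * γ)) • Cπ⁻¹) - Real.exp γ • (1 : Matrix (Fin d) (Fin d) ℝ))⁻¹)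
    (J : ℕ → Matrix (Fin d) (Fin d) ℝ → Matrix (Fin d) (Fin d) ℝ)
    (hJ : ∀ n B, J n B = NormedSpace.exp ((-((n : ℝ) * γ)) • Γ) *
      (E₀⁻¹ + B * Cπ⁻¹ * (1 - NormedSpace.exp ((-(2 * (n : ℝ) * γ)) • Γ)))⁻¹ *
      NormedSpace.exp ((-((n : ℝ) * γ)) • Γ))
    (B : Matrix (Fin d) (Fin d) ℝ)
    (hB : B = Ω ∨ B = Ωβ ∨ B = Ωα)
    (hneg : (-(E₀⁻¹ + B * Cπ⁻¹)).PosDef) :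
    ∀ n : ℕ, 1 ≤ n →
      (-(E₀⁻¹ + B * Cπ⁻¹ * (1 - NormedSpace.exp ((-(2 * (n : ℝ) * γ)) • Γ)))).PosDef ∧
      IsUnit (E₀⁻¹ + B * Cπ⁻¹ * (1 - NormedSpace.exp ((-(2 * (n : ℝ) * γ)) • Γ))) ∧
      (-(J n B)).PosDef :=
  wfr_covariance_errors_negDef_general d Cπ hCπ Γ hΓ γ hγ E₀ Ω Ωβ Ωα hΩ hΩβ hΩα J hJ B hB hneg
end

section
/- Let b > 0 and α_π > 0 with α_π > 2b², and define g(τ) := (1/b)·arctan( (1 − e^{−τ})·α_π/(2b) ) for τ ≥ 0. Then there exists τ > 0 such that g(τ) = τ. (This guarantees a strictly positive uniform admissible step size threshold in the proof that the Wasserstein–Fisher–Rao flow preserves log-concavity uniformly in time, under the condition b² < α_π/2.) -/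
open Real Filter Function Set Topology

/- A continuous map `f` with `f 0 = 0` and `f'(0) > 1` lies above the diagonal just to the right
of `0`; if `f` is also bounded above, it lies below the diagonal far to the right, so the
intermediate value theorem gives a positive fixed point. For the step-size map,
`g'(0) = α_π / (2b²) > 1` is exactly the condition `b² < α_π / 2`, and `g < π / (2b)`. -/

theorem HasDerivAt.exists_gt_lt_of_isFixedPt {f : ℝ → ℝ} {d x₀ : ℝ} (hf : HasDerivAt f d x₀)
    (hx₀ : IsFixedPt f x₀) (hd : 1 < d) : ∃ t, x₀ < t ∧ t < f t := by
  have hF : HasDerivAt (fun x => f x - x) (d - 1) x₀ := hf.sub (hasDerivAt_id x₀)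
  have hslope : ∀ᶠ t in 𝓝[>] x₀, 0 < slope (fun x => f x - x) x₀ t :=
    ((hasDerivAt_iff_tendsto_slope.mp hF).mono_left (nhdsGT_le_nhdsNE x₀)).eventually
      (eventually_gt_nhds (sub_pos.mpr hd))
  obtain ⟨t, ht, hx₀t⟩ := (hslope.and self_mem_nhdsWithin).exists
  exact ⟨t, hx₀t, sub_pos.mp (pos_of_slope_pos (f := fun x => f x - x) hx₀t ht (sub_eq_zero.mpr hx₀))⟩

theorem exists_gt_isFixedPt_of_hasDerivAt_of_bddAbove {f : ℝ → ℝ} {d x₀ : ℝ}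
    (hc : Continuous f) (hf : HasDerivAt f d x₀) (hx₀ : IsFixedPt f x₀) (hd : 1 < d)
    (hbdd : BddAbove (range f)) : ∃ τ, x₀ < τ ∧ IsFixedPt f τ := by
  obtain ⟨t, hx₀t, ht⟩ := hf.exists_gt_lt_of_isFixedPt hx₀ hd
  obtain ⟨M, hM⟩ := hbdd
  set T := max t M + 1
  have htT : t ≤ T := by linarith [le_max_left t M]
  have hfT : f T < T := (hM (mem_range_self T)).trans_lt (by linarith [le_max_right t M])
  obtain ⟨τ, hτ, hfτ⟩ := intermediate_value_Icc' htT (hc.sub continuous_id).continuousOn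
    ⟨(sub_neg.mpr hfT).le, (sub_pos.mpr ht).le⟩
  exact ⟨τ, hx₀t.trans_le hτ.1, sub_eq_zero.mp hfτ⟩

theorem hasDerivAt_arctan_one_sub_exp_neg (a b : ℝ) :
    HasDerivAt (fun τ => (1 / b) * arctan ((1 - exp (-τ)) * a / (2 * b))) (a / (2 * b ^ 2)) 0 := by
  have hinner : HasDerivAt (fun τ : ℝ => (1 - exp (-τ)) * a / (2 * b)) (a / (2 * b)) 0 := by
    simpa using (((hasDerivAt_neg (0 : ℝ)).exp.const_sub 1).mul_const a).div_const (2 * b)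
  refine (((hasDerivAt_arctan _).comp 0 hinner).const_mul (1 / b)).congr_deriv ?_
  norm_num
  ring

theorem bddAbove_range_one_div_mul_arctan {b : ℝ} (hb : 0 < b) (u : ℝ → ℝ) :
    BddAbove (range fun τ => (1 / b) * arctan (u τ)) := by
  refine ⟨1 / b * (π / 2), forall_mem_range.mpr fun τ => ?_⟩
  exact mul_le_mul_of_nonneg_left (arctan_lt_pi_div_two _).le (by positivity)

theorem positive_fixed_point_step_size_threshold_general
    (b απ : ℝ) (hb : 0 < b) (h : 2 * b ^ 2 < απ)
    (g : ℝ → ℝ) (hg : ∀ τ, g τ = (1 / b) * arctan ((1 - exp (-τ)) * απ / (2 * b))) :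
    ∃ τ : ℝ, 0 < τ ∧ g τ = τ := by
  obtain rfl : g = fun τ => (1 / b) * arctan ((1 - exp (-τ)) * απ / (2 * b)) := funext hg
  have hd : 1 < απ / (2 * b ^ 2) := by rw [one_lt_div (by positivity)]; exact h
  exact exists_gt_isFixedPt_of_hasDerivAt_of_bddAbove (by fun_prop)
    (hasDerivAt_arctan_one_sub_exp_neg απ b) (by simp [IsFixedPt]) hd
    (bddAbove_range_one_div_mul_arctan hb _)

/-- If `b > 0`, `α_π > 0` and `α_π > 2b²`, then the map
`g(τ) = (1/b)·arctan((1 − e^{−τ})·α_π/(2b))` has a strictly positive fixed point. -/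
theorem positive_fixed_point_step_size_threshold
    (b απ : ℝ) (hb : 0 < b) (hαπ : 0 < απ) (h : 2 * b ^ 2 < απ)
    (g : ℝ → ℝ) (hg : ∀ τ, g τ = (1 / b) * arctan ((1 - exp (-τ)) * απ / (2 * b))) :
    ∃ τ : ℝ, 0 < τ ∧ g τ = τ :=
  positive_fixed_point_step_size_threshold_general b απ hb h g hg
end

section
/- Let b ≥ 0 and α_π > 0 with b² < α_π/2, and let c_0 > 0. Set Δ := √(1 + 4(α_π/2 − b²)), c_{∞,1} := (−1 + Δ)/2, c_{∞,2} := (−1 − Δ)/2 and l_0 := (c_0 − c_{∞,1})/(c_0 − c_{∞,2}). Define c(t) := ( c_{∞,1} − c_{∞,2}·l_0·e^{−t(c_{∞,1} − c_{∞,2})} ) / ( 1 − l_0·e^{−t(c_{∞,1} − c_{∞,2})} ) for t ≥ 0. Then |l_0| < 1, the denominator 1 − l_0 e^{−t(c_{∞,1}−c_{∞,2})} is nonzero for all t ≥ 0, c(0) = c_0, and for every t ≥ 0 the function c is differentiable at t with c'(t) = −c(t)² − c(t) − b² + α_π/2. (This explicit Riccati solution yields the uniform-in-time log-concavity constant α_t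 = α_π/2 + c(t) of the Wasserstein–Fisher–Rao flow in the paper's main log-concavity theorem.) -/
/-!
Writing the Riccati right-hand side as `-(c - c₁)(c - c₂)` with roots `c₁ > c₂`, the cross-ratio
`(c - c₁) / (c - c₂)` solves the linear equation `l' = -(c₁ - c₂) l`, so it equals
`l₀ e^{-(c₁ - c₂) t}`; solving for `c` gives the explicit formula. Since `c₀ > -1/2`, the
midpoint of the roots, `c₀` is closer to `c₁` than to `c₂`, i.e. `|l₀| < 1`, and the denominator
`1 - l₀ e^{-(c₁ - c₂) t}` stays positive for `t ≥ 0`.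
-/

open Real

noncomputable def riccatiSolution (r₁ r₂ l t : ℝ) : ℝ :=
  (r₁ - r₂ * l * exp (-t * (r₁ - r₂))) / (1 - l * exp (-t * (r₁ - r₂)))

theorem hasDerivAt_riccatiSolution (r₁ r₂ l t : ℝ)
    (hden : 1 - l * exp (-t * (r₁ - r₂)) ≠ 0) :
    HasDerivAt (riccatiSolution r₁ r₂ l)
      (-(riccatiSolution r₁ r₂ l t - r₁) * (riccatiSolution r₁ r₂ l t - r₂)) t := by
  have hexp : HasDerivAt (fun s => exp (-s * (r₁ - r₂)))
      (exp (-t * (r₁ - r₂)) * (-1 * (r₁ - r₂))) t :=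
    (((hasDerivAt_id t).neg).mul_const (r₁ - r₂)).exp
  have hquot := ((hasDerivAt_const t r₁).sub (hexp.const_mul (r₂ * l))).div
    ((hasDerivAt_const t 1).sub (hexp.const_mul l)) hden
  refine hquot.congr_deriv ?_
  simp only [riccatiSolution, Pi.sub_apply]
  generalize exp (-t * (r₁ - r₂)) = E at hden ⊢
  field_simp
  ring

theorem riccatiSolution_zero {r₁ r₂ c₀ : ℝ} (hr : r₁ ≠ r₂) (hc₀ : c₀ ≠ r₂) :
    riccatiSolution r₁ r₂ ((c₀ - r₁) / (c₀ - r₂)) 0 = c₀ := by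
  have hc₀' : c₀ - r₂ ≠ 0 := sub_ne_zero.mpr hc₀
  have hr' : r₁ - r₂ ≠ 0 := sub_ne_zero.mpr hr
  have hden : 1 - (c₀ - r₁) / (c₀ - r₂) = (r₁ - r₂) / (c₀ - r₂) := by field_simp; ring
  simp only [riccatiSolution, neg_zero, zero_mul, exp_zero, mul_one]
  rw [hden, div_eq_iff (div_ne_zero hr' hc₀')]
  field_simp
  ring

theorem abs_div_sub_sub_lt_one {r₁ r₂ c₀ : ℝ} (hr : r₂ < r₁) (hc₀ : r₂ < c₀)
    (hmid : r₁ + r₂ < 2 * c₀) : |(c₀ - r₁) / (c₀ - r₂)| < 1 := by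
  have hpos : 0 < c₀ - r₂ := sub_pos.mpr hc₀
  rw [abs_div, abs_of_pos hpos, div_lt_one hpos, abs_lt]
  constructor <;> linarith

theorem one_sub_mul_exp_neg_ne_zero {l t k : ℝ} (hl : |l| < 1) (ht : 0 ≤ t) (hk : 0 ≤ k) :
    1 - l * exp (-t * k) ≠ 0 := by
  have hexp_le : exp (-t * k) ≤ 1 := exp_le_one_iff.mpr (by nlinarith)
  have hlt : l * exp (-t * k) < 1 :=
    calc l * exp (-t * k) ≤ |l| * exp (-t * k) := by gcongr; exact le_abs_self l
      _ ≤ |l| * 1 := by gcongr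
      _ < 1 := by linarith
  linarith

theorem riccati_uniform_log_concavity_solution_general
    (b απ c₀ : ℝ) (hbαπ : b ^ 2 < απ / 2) (hc₀ : 0 < c₀)
    (Δ c₁ c₂ l₀ : ℝ)
    (hΔ : Δ = Real.sqrt (1 + 4 * (απ / 2 - b ^ 2)))
    (hc₁ : c₁ = (-1 + Δ) / 2) (hc₂ : c₂ = (-1 - Δ) / 2)
    (hl₀ : l₀ = (c₀ - c₁) / (c₀ - c₂))
    (c : ℝ → ℝ)
    (hc : ∀ t, c t = (c₁ - c₂ * l₀ * exp (-t * (c₁ - c₂))) /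
      (1 - l₀ * exp (-t * (c₁ - c₂)))) :
    |l₀| < 1 ∧
    (∀ t : ℝ, 0 ≤ t → 1 - l₀ * exp (-t * (c₁ - c₂)) ≠ 0) ∧
    c 0 = c₀ ∧
    (∀ t : ℝ, 0 ≤ t →
      HasDerivAt c (-(c t) ^ 2 - c t - b ^ 2 + απ / 2) t) := by
  have hc_eq : c = riccatiSolution c₁ c₂ l₀ := funext hc
  have hΔ_sq : Δ ^ 2 = 1 + 4 * (απ / 2 - b ^ 2) := by rw [hΔ, sq_sqrt (by linarith)]
  have hΔ_pos : 0 < Δ := hΔ ▸ sqrt_pos.mpr (by linarith)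
  have hgap : c₂ < c₁ := by rw [hc₁, hc₂]; linarith
  have hl : |l₀| < 1 :=
    hl₀ ▸ abs_div_sub_sub_lt_one hgap (by rw [hc₂]; linarith) (by rw [hc₁, hc₂]; linarith)
  have hden : ∀ t : ℝ, 0 ≤ t → 1 - l₀ * exp (-t * (c₁ - c₂)) ≠ 0 :=
    fun t ht => one_sub_mul_exp_neg_ne_zero hl ht (sub_nonneg.mpr hgap.le)
  refine ⟨hl, hden, ?_, fun t ht => ?_⟩
  · rw [hc_eq, hl₀, riccatiSolution_zero hgap.ne' (by rw [hc₂]; linarith)]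
  · rw [hc_eq]
    convert hasDerivAt_riccatiSolution c₁ c₂ l₀ t (hden t ht) using 1
    rw [hc₁, hc₂]
    linear_combination (-1 / 4 : ℝ) * hΔ_sq

/-- Explicit solution of the Riccati equation
`c' = −c² − c − b² + α_π/2` in terms of the two real roots
`c_{∞,1} > 0 > c_{∞,2}` of the quadratic, yielding the uniform-in-time log-concavity
constant of the Wasserstein–Fisher–Rao flow. -/
theorem riccati_uniform_log_concavity_solution
    (b απ c₀ : ℝ) (hb : 0 ≤ b) (hαπ : 0 < απ) (hbαπ : b ^ 2 < απ / 2) (hc₀ : 0 < c₀)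
    (Δ c₁ c₂ l₀ : ℝ)
    (hΔ : Δ = Real.sqrt (1 + 4 * (απ / 2 - b ^ 2)))
    (hc₁ : c₁ = (-1 + Δ) / 2) (hc₂ : c₂ = (-1 - Δ) / 2)
    (hl₀ : l₀ = (c₀ - c₁) / (c₀ - c₂))
    (c : ℝ → ℝ)
    (hc : ∀ t, c t = (c₁ - c₂ * l₀ * exp (-t * (c₁ - c₂))) /
      (1 - l₀ * exp (-t * (c₁ - c₂)))) :
    |l₀| < 1 ∧
    (∀ t : ℝ, 0 ≤ t → 1 - l₀ * exp (-t * (c₁ - c₂)) ≠ 0) ∧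
    c 0 = c₀ ∧
    (∀ t : ℝ, 0 ≤ t →
      HasDerivAt c (-(c t) ^ 2 - c t - b ^ 2 + απ / 2) t) :=
  riccati_uniform_log_concavity_solution_general b απ c₀ hbαπ hc₀ Δ c₁ c₂ l₀ hΔ hc₁ hc₂ hl₀ c hc
end
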